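/- arXiv:1401.6156 — 6 statements merged into one kernel-verified Lean document; each statement's English description precedes it below -/
import Mathlib

section
/- (Olshanskii's Lemma) Let n, m ≥ 0 and let Z_{n,m} denote the centralizer of the subalgebra ℂ[S_n] in the group algebra ℂ[S_{n+m}], where S_n ⊆ S_{n+m} is the subgroup of permutations fixing n+1, …, n+m. Then Z_{n,m} is generated as a ℂ-algebra by: (a) the group algebra of the subgroup S'_m ⊆ S_{n+m} of permutations fixing 1, …, n pointwise, (b) the center Z_n of ℂ[S_n], and (c) the Jucys–Murphy elements L_{n+1}, …, L_{n+m}. -/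
/-!
Grade `ℂ[S_{n+m}]` by the degree of a permutation `g`: the number of letters among
`1, …, n` that `g` moves. Elements of the centralizer have coefficients constant on
`S_n`-conjugacy classes, so it suffices to find, for every `g`, an element `Q_g` of the
generated algebra with nonzero coefficient at `g` whose other terms are `S_n`-conjugates
of `g` or have smaller degree: subtracting a multiple of `Q_g` then removes the whole
class of `g` from the top degree.

If `g` sends a letter `x ≤ n` to a letter `b > n`, then `g = (x b) g'` where `g'` fixes
`x` and has degree one less, and `Q_g = X_b Q_{g'}` with `X_b = Σ_{i ≤ n} (i b)`, which is
`L_b` minus elements of `S'_m`. A term `(i b) τ` of top degree has `τ = h g' h⁻¹` with `i`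
fixed by `τ`, and then it is the conjugate of `g` by `h (x, h⁻¹ i)`. Otherwise `g`
preserves `{1, …, n}`, so `g = κ σ` with `κ ∈ S'_m`, `σ ∈ S_n`, and
`Q_g = κ · Σ_{h ∈ S_n} h σ h⁻¹`. Each `Q_g` is a sum of group elements with positive
multiplicities, so its coefficient at `g` cannot cancel.
-/

open MonoidAlgebra

/-- The `k`-th Jucys–Murphy element of `ℂ[S_N]` (0-indexed: `JM N k` corresponds to the
classical `L_{k+1} = Σ_{m < k+1} (m, k+1)`, so `JM N 0 = L₁ = 0`). -/
noncomputable def JM (N : ℕ) (k : Fin N) : MonoidAlgebra ℂ (Equiv.Perm (Fin N)) :=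
  ∑ m ∈ Finset.univ.filter (fun m : Fin N => m < k),
    MonoidAlgebra.of ℂ (Equiv.Perm (Fin N)) (Equiv.swap m k)

/-- The group algebra `ℂ[S_n]` inside `ℂ[S_{n+m}]`, where `S_n` is the subgroup of
permutations fixing the letters `n+1, …, n+m` (0-indexed: fixing all `j ≥ n`). -/
noncomputable def lowerGroupAlgebra (n m : ℕ) :
    Subalgebra ℂ (MonoidAlgebra ℂ (Equiv.Perm (Fin (n + m)))) :=
  Algebra.adjoin ℂ
    {a | ∃ σ : Equiv.Perm (Fin (n + m)),
      (∀ j : Fin (n + m), n ≤ (j : ℕ) → σ j = j) ∧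
      a = MonoidAlgebra.of ℂ (Equiv.Perm (Fin (n + m))) σ}

open Equiv Finset

theorem Subalgebra.centralizer_coe_adjoin {R A : Type*} [CommSemiring R] [Semiring A]
    [Algebra R A] (s : Set A) :
    Subalgebra.centralizer R (Algebra.adjoin R s : Set A) = Subalgebra.centralizer R s :=
  le_antisymm (Subalgebra.centralizer_le R _ _ Algebra.subset_adjoin) fun _ hz =>
    (Subalgebra.le_centralizer_iff _ _).mp
      (Algebra.adjoin_le_centralizer_centralizer R s) hz

namespace MonoidAlgebra

section CommSemiring

variable {k G : Type*} [CommSemiring k] [Group G]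

theorem coeff_conj_of_mem_centralizer {H : Subgroup G} {x : MonoidAlgebra k G}
    (hx : x ∈ Subalgebra.centralizer k (of k G '' H)) {h : G} (hh : h ∈ H) (g : G) :
    x.coeff (h * g * h⁻¹) = x.coeff g := by
  have hcomm := congrArg (fun y => y.coeff (h * g)) (hx _ ⟨h, hh, rfl⟩)
  simpa [of_apply, coeff_single_mul_apply, coeff_mul_single_apply] using hcomm.symm

theorem sum_of_conj_mem_centralizer (H : Subgroup G) [Fintype H] (g : G) :
    ∑ h : H, of k G (h * g * h⁻¹) ∈ Subalgebra.centralizer k (of k G '' H) := by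
  rintro _ ⟨u, hu, rfl⟩
  rw [Finset.mul_sum, Finset.sum_mul]
  refine Fintype.sum_equiv (Equiv.mulLeft (⟨u, hu⟩ : H)) _ _ fun h => ?_
  simp only [Equiv.coe_mulLeft, Subgroup.coe_mul, Subgroup.coe_inv, ← map_mul]
  group

variable [DecidableEq G]

theorem coeff_sum_map_of (M : Multiset G) (g : G) :
    ((M.map (of k G)).sum).coeff g = M.count g := by
  induction M using Multiset.induction_on with
  | empty => simp
  | cons a M ih =>
    rw [Multiset.map_cons, Multiset.sum_cons, coeff_add, Finsupp.add_apply, ih,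
      Multiset.count_cons, of_apply, coeff_single, Finsupp.single_apply]
    rcases eq_or_ne a g with rfl | hne
    · simp [add_comm]
    · simp [hne, hne.symm]

end CommSemiring

section Field

variable {k G : Type*} [Field k] [Group G]

theorem support_sub_smul_subset {H : Subgroup G} {x Q : MonoidAlgebra k G}
    (hx : x ∈ Subalgebra.centralizer k (of k G '' H))
    (hQ : Q ∈ Subalgebra.centralizer k (of k G '' H)) {g : G} (hQg : Q.coeff g ≠ 0)
    {deg : G → ℕ}
    (hlead : ∀ τ ∈ Q.coeff.support, deg τ < deg g ∨ ∃ h ∈ H, h * g * h⁻¹ = τ) :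
    ∀ τ ∈ (x - (x.coeff g / Q.coeff g) • Q).coeff.support,
      (τ ∈ x.coeff.support ∧ τ ≠ g) ∨ deg τ < deg g := by
  intro τ hτ
  have hcoeff : (x - (x.coeff g / Q.coeff g) • Q).coeff τ
      = x.coeff τ - x.coeff g / Q.coeff g * Q.coeff τ := by
    simp [coeff_sub, coeff_smul]
  rw [Finsupp.mem_support_iff, hcoeff] at hτ
  by_cases hτQ : Q.coeff τ = 0
  · rw [hτQ, mul_zero, sub_zero] at hτ
    refine Or.inl ⟨Finsupp.mem_support_iff.mpr hτ, ?_⟩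
    rintro rfl
    exact hQg hτQ
  · rcases hlead τ (Finsupp.mem_support_iff.mpr hτQ) with hlt | ⟨h, hh, rfl⟩
    · exact Or.inr hlt
    · rw [coeff_conj_of_mem_centralizer hx hh, coeff_conj_of_mem_centralizer hQ hh,
        div_mul_cancel₀ _ hQg, sub_self] at hτ
      exact absurd rfl hτ

theorem filter_support_sub_smul_ssubset {H : Subgroup G} {x Q : MonoidAlgebra k G}
    (hx : x ∈ Subalgebra.centralizer k (of k G '' H))
    (hQ : Q ∈ Subalgebra.centralizer k (of k G '' H)) {g : G} (hQg : Q.coeff g ≠ 0)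
    {deg : G → ℕ}
    (hlead : ∀ τ ∈ Q.coeff.support, deg τ < deg g ∨ ∃ h ∈ H, h * g * h⁻¹ = τ)
    (hgx : g ∈ x.coeff.support) :
    {τ ∈ (x - (x.coeff g / Q.coeff g) • Q).coeff.support | deg τ = deg g} ⊂
      {τ ∈ x.coeff.support | deg τ = deg g} := by
  refine (Finset.ssubset_iff_of_subset fun τ hτ => ?_).mpr
    ⟨g, by simp [hgx], by simp [div_mul_cancel₀ _ hQg]⟩
  rw [Finset.mem_filter] at hτ ⊢
  rcases support_sub_smul_subset hx hQ hQg hlead τ hτ.1 with ⟨hτx, -⟩ | hlt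
  exacts [⟨hτx, hτ.2⟩, absurd hτ.2 hlt.ne]

theorem centralizer_le_of_forall_exists_lead {H : Subgroup G}
    {A : Subalgebra k (MonoidAlgebra k G)} (hA : A ≤ Subalgebra.centralizer k (of k G '' H))
    (deg : G → ℕ) (hlead : ∀ g, ∃ Q ∈ A, Q.coeff g ≠ 0 ∧
      ∀ τ ∈ Q.coeff.support, deg τ < deg g ∨ ∃ h ∈ H, h * g * h⁻¹ = τ) :
    Subalgebra.centralizer k (of k G '' H) ≤ A := by
  suffices ∀ d, ∀ x ∈ Subalgebra.centralizer k (of k G '' H),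
      (∀ τ ∈ x.coeff.support, deg τ < d) → x ∈ A from
    fun x hx => this _ x hx fun τ hτ => Nat.lt_succ_of_le (Finset.le_sup (f := deg) hτ)
  intro d
  induction d with
  | zero =>
    intro x _ hx
    obtain rfl : x = 0 := coeff_inj.mp (Finsupp.support_eq_empty.mp
      (Finset.eq_empty_of_forall_notMem fun τ hτ => Nat.not_lt_zero _ (hx τ hτ)))
    exact zero_mem A
  | succ d ih =>
    suffices ∀ N, ∀ x ∈ Subalgebra.centralizer k (of k G '' H),
        (∀ τ ∈ x.coeff.support, deg τ < d + 1) →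
        #{τ ∈ x.coeff.support | deg τ = d} < N → x ∈ A from
      fun x hx hdeg => this _ x hx hdeg (Nat.lt_succ_self _)
    intro N
    induction N with
    | zero => exact fun _ _ _ h => absurd h (Nat.not_lt_zero _)
    | succ N ihN =>
      intro x hx hdeg hN
      by_cases htop : ∃ g ∈ x.coeff.support, deg g = d
      · obtain ⟨g, hgx, rfl⟩ := htop
        obtain ⟨Q, hQA, hQg, hQlead⟩ := hlead g
        have hx' : x - (x.coeff g / Q.coeff g) • Q ∈ A := by
          refine ihN _ (sub_mem hx (Subalgebra.smul_mem _ (hA hQA) _)) ?_ ?_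
          · intro τ hτ
            rcases support_sub_smul_subset hx (hA hQA) hQg hQlead τ hτ with ⟨hτx, -⟩ | hlt
            exacts [hdeg τ hτx, Nat.lt_succ_of_lt hlt]
          · exact (Finset.card_lt_card (filter_support_sub_smul_ssubset hx (hA hQA) hQg
              hQlead hgx)).trans_le (Nat.lt_succ_iff.mp hN)
        simpa using add_mem hx' (Subalgebra.smul_mem A hQA (x.coeff g / Q.coeff g))
      · push Not at htop
        exact ih x hx fun τ hτ => lt_of_le_of_ne (Nat.lt_succ_iff.mp (hdeg τ hτ)) (htop τ hτ)

end Field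

end MonoidAlgebra

namespace Olshanskii

variable {n m : ℕ}

def lowerPerms (n m : ℕ) : Subgroup (Perm (Fin (n + m))) :=
  fixingSubgroup (Perm (Fin (n + m))) {j : Fin (n + m) | n ≤ (j : ℕ)}

def upperPerms (n m : ℕ) : Subgroup (Perm (Fin (n + m))) :=
  fixingSubgroup (Perm (Fin (n + m))) {j : Fin (n + m) | (j : ℕ) < n}

def lowerLetters (n m : ℕ) : Finset (Fin (n + m)) := {j | (j : ℕ) < n}

theorem mem_lowerPerms {σ : Perm (Fin (n + m))} :
    σ ∈ lowerPerms n m ↔ ∀ j : Fin (n + m), n ≤ (j : ℕ) → σ j = j := by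
  simp [lowerPerms, mem_fixingSubgroup_iff, Perm.smul_def]

theorem mem_upperPerms {σ : Perm (Fin (n + m))} :
    σ ∈ upperPerms n m ↔ ∀ j : Fin (n + m), (j : ℕ) < n → σ j = j := by
  simp [upperPerms, mem_fixingSubgroup_iff, Perm.smul_def]

theorem apply_lt_iff_of_mem_lowerPerms {σ : Perm (Fin (n + m))} (hσ : σ ∈ lowerPerms n m)
    {j : Fin (n + m)} :
    (σ j : ℕ) < n ↔ (j : ℕ) < n := by
  refine ⟨fun h => ?_, fun h => ?_⟩ <;> by_contra hn <;> push Not at hn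
  · rw [mem_lowerPerms.mp hσ j hn] at h
    omega
  · rw [σ.injective (mem_lowerPerms.mp hσ _ hn)] at hn
    omega

theorem commute_of_mem_lowerPerms_of_mem_upperPerms {σ κ : Perm (Fin (n + m))}
    (hσ : σ ∈ lowerPerms n m) (hκ : κ ∈ upperPerms n m) : Commute σ κ :=
  Perm.Disjoint.commute fun j => by
    rcases lt_or_ge (j : ℕ) n with h | h
    exacts [Or.inr (mem_upperPerms.mp hκ j h), Or.inl (mem_lowerPerms.mp hσ j h)]

theorem swap_mem_lowerPerms {i j : Fin (n + m)} (hi : (i : ℕ) < n) (hj : (j : ℕ) < n) :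
    swap i j ∈ lowerPerms n m :=
  mem_lowerPerms.mpr fun k hk =>
    swap_apply_of_ne_of_ne (by rintro rfl; omega) (by rintro rfl; omega)

theorem swap_mem_upperPerms {i j : Fin (n + m)} (hi : n ≤ (i : ℕ)) (hj : n ≤ (j : ℕ)) :
    swap i j ∈ upperPerms n m :=
  mem_upperPerms.mpr fun k hk =>
    swap_apply_of_ne_of_ne (by rintro rfl; omega) (by rintro rfl; omega)

theorem lowerGroupAlgebra_eq_adjoin :
    lowerGroupAlgebra n m = Algebra.adjoin ℂ (of ℂ _ '' lowerPerms n m) := by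
  simp only [lowerGroupAlgebra, mem_lowerPerms.symm]
  congr 1
  ext a
  simp [eq_comm]

theorem centralizer_lowerGroupAlgebra :
    Subalgebra.centralizer ℂ
        (lowerGroupAlgebra n m : Set (MonoidAlgebra ℂ (Perm (Fin (n + m))))) =
      Subalgebra.centralizer ℂ (of ℂ _ '' lowerPerms n m) := by
  rw [lowerGroupAlgebra_eq_adjoin, Subalgebra.centralizer_coe_adjoin]

def generators (n m : ℕ) : Set (MonoidAlgebra ℂ (Perm (Fin (n + m)))) :=
  {a | ∃ σ : Perm (Fin (n + m)), (∀ j : Fin (n + m), (j : ℕ) < n → σ j = j) ∧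
      a = of ℂ _ σ} ∪
    {z | z ∈ lowerGroupAlgebra n m ∧ ∀ w ∈ lowerGroupAlgebra n m, z * w = w * z} ∪
    {a | ∃ k : Fin (n + m), n ≤ (k : ℕ) ∧ a = JM (n + m) k}

theorem of_mem_adjoin_generators {κ : Perm (Fin (n + m))} (hκ : κ ∈ upperPerms n m) :
    of ℂ _ κ ∈ Algebra.adjoin ℂ (generators n m) :=
  Algebra.subset_adjoin (Or.inl (Or.inl ⟨κ, mem_upperPerms.mp hκ, rfl⟩))

theorem mem_adjoin_generators_of_mem_centralizer {z : MonoidAlgebra ℂ (Perm (Fin (n + m)))}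
    (hz : z ∈ lowerGroupAlgebra n m)
    (hzc : z ∈ Subalgebra.centralizer ℂ (of ℂ _ '' lowerPerms n m)) :
    z ∈ Algebra.adjoin ℂ (generators n m) := by
  rw [← centralizer_lowerGroupAlgebra] at hzc
  exact Algebra.subset_adjoin (Or.inl (Or.inr ⟨hz, fun w hw => (hzc w hw).symm⟩))

theorem sum_of_swap_mem_adjoin_generators {b : Fin (n + m)} (hb : n ≤ (b : ℕ)) :
    ∑ i ∈ lowerLetters n m, of ℂ _ (swap i b) ∈ Algebra.adjoin ℂ (generators n m) := by
  have hJM : JM (n + m) b ∈ Algebra.adjoin ℂ (generators n m) :=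
    Algebra.subset_adjoin (Or.inr ⟨b, hb, rfl⟩)
  rw [JM, ← Finset.sum_filter_add_sum_filter_not _ (fun i : Fin (n + m) => (i : ℕ) < n)] at hJM
  have hlower : ({i : Fin (n + m) | i < b} : Finset _).filter
      (fun i : Fin (n + m) => (i : ℕ) < n) = lowerLetters n m := by
    ext i
    simp only [lowerLetters, Finset.mem_filter, Finset.mem_univ, true_and, Fin.lt_def]
    omega
  rw [hlower] at hJM
  refine (add_mem_cancel_right (Subalgebra.sum_mem _ fun i hi => ?_)).mp hJM
  simp only [Finset.mem_filter, Finset.mem_univ, true_and, not_lt] at hi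
  exact of_mem_adjoin_generators (swap_mem_upperPerms hi.2 hb)

theorem JM_mem_centralizer {k : Fin (n + m)} (hk : n ≤ (k : ℕ)) :
    JM (n + m) k ∈ Subalgebra.centralizer ℂ (of ℂ _ '' lowerPerms n m) := by
  rintro _ ⟨h, hh, rfl⟩
  rw [JM, Finset.mul_sum, Finset.sum_mul]
  refine Finset.sum_equiv h (fun i => ?_) fun i _ => ?_
  · simp only [Finset.mem_filter, Finset.mem_univ, true_and, Fin.lt_def]
    have := apply_lt_iff_of_mem_lowerPerms hh (j := i)
    rcases lt_or_ge (i : ℕ) n with hi | hi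
    · omega
    · rw [mem_lowerPerms.mp hh i hi]
  · rw [← map_mul, ← map_mul, ← mem_lowerPerms.mp hh k hk, swap_apply_apply,
      mem_lowerPerms.mp hh k hk, inv_mul_cancel_right]

theorem adjoin_generators_le_centralizer :
    Algebra.adjoin ℂ (generators n m) ≤
      Subalgebra.centralizer ℂ (of ℂ _ '' lowerPerms n m) := by
  refine Algebra.adjoin_le ?_
  rintro _ ((⟨κ, hκ, rfl⟩ | ⟨-, hz⟩) | ⟨k, hk, rfl⟩)
  · rintro _ ⟨h, hh, rfl⟩
    rw [← map_mul, ← map_mul,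
      (commute_of_mem_lowerPerms_of_mem_upperPerms hh (mem_upperPerms.mpr hκ)).eq]
  · rw [← centralizer_lowerGroupAlgebra]
    exact fun w hw => (hz w hw).symm
  · exact JM_mem_centralizer hk

def lowerSupport (n : ℕ) {m : ℕ} (g : Perm (Fin (n + m))) : Finset (Fin (n + m)) :=
  {j ∈ g.support | (j : ℕ) < n}

theorem mem_lowerSupport {g : Perm (Fin (n + m))} {j : Fin (n + m)} :
    j ∈ lowerSupport n g ↔ (j : ℕ) < n ∧ g j ≠ j := by
  rw [lowerSupport, Finset.mem_filter, Perm.mem_support, and_comm]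

theorem card_lowerSupport_conj {g h : Perm (Fin (n + m))} (hh : h ∈ lowerPerms n m) :
    #(lowerSupport n (h * g * h⁻¹)) = #(lowerSupport n g) := by
  rw [lowerSupport, Perm.support_conj, Finset.filter_map, Finset.card_map, lowerSupport]
  congr 1
  exact Finset.filter_congr fun j _ => apply_lt_iff_of_mem_lowerPerms hh

theorem lowerSupport_swap_mul_subset {g : Perm (Fin (n + m))} {i b : Fin (n + m)}
    (hb : n ≤ (b : ℕ)) : lowerSupport n (swap i b * g) ⊆ insert i (lowerSupport n g) := by
  intro j hj
  rw [mem_lowerSupport] at hj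
  rw [Finset.mem_insert, mem_lowerSupport]
  by_contra! hne
  have hbj : b ≠ j := by rintro rfl; omega
  exact hj.2 (by rw [Perm.mul_apply, hne.2 hj.1, swap_apply_of_ne_of_ne hne.1 hbj.symm])

theorem lowerSupport_swap_mul_of_apply_eq {g : Perm (Fin (n + m))} {x b : Fin (n + m)}
    (hx : (x : ℕ) < n) (hb : n ≤ (b : ℕ)) (hgx : g x = x) :
    lowerSupport n (swap x b * g) = insert x (lowerSupport n g) := by
  refine (lowerSupport_swap_mul_subset hb).antisymm (Finset.insert_subset ?_ fun j hj => ?_)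
  · rw [mem_lowerSupport, Perm.mul_apply, hgx, swap_apply_left]
    exact ⟨hx, by rintro rfl; omega⟩
  · rw [mem_lowerSupport] at hj ⊢
    refine ⟨hj.1, fun hfix => hj.2 ?_⟩
    rw [Perm.mul_apply] at hfix
    have hgjx : g j ≠ x := fun h => hj.2 (by rw [g.injective (h.trans hgx.symm), hgx])
    have hgjb : g j ≠ b := by
      intro h
      rw [h, swap_apply_right] at hfix
      subst hfix
      rw [hgx] at h
      omega
    rwa [swap_apply_of_ne_of_ne hgjx hgjb] at hfix

theorem conj_swap_mul {g h : Perm (Fin (n + m))} (hh : h ∈ lowerPerms n m) {x y b : Fin (n + m)}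
    (hx : (x : ℕ) < n) (hy : (y : ℕ) < n) (hb : n ≤ (b : ℕ))
    (hgx : g x = x) (hgy : g y = y) :
    (h * swap x y) * (swap x b * g) * (h * swap x y)⁻¹ = swap (h y) b * (h * g * h⁻¹) := by
  set k := swap x y
  have hcomm : Commute k g := by
    rw [Commute, SemiconjBy, swap_mul_eq_mul_swap, Perm.inv_eq_iff_eq.mpr hgx.symm,
      Perm.inv_eq_iff_eq.mpr hgy.symm]
  have hswap : k * swap x b * k⁻¹ = swap y b := by
    rw [← swap_apply_apply, swap_apply_left,
      swap_apply_of_ne_of_ne (by rintro rfl; omega) (by rintro rfl; omega)]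
  calc (h * k) * (swap x b * g) * (h * k)⁻¹
      = h * (k * swap x b * k⁻¹) * (k * g * k⁻¹) * h⁻¹ := by group
    _ = (h * swap y b * h⁻¹) * (h * g * h⁻¹) := by
        rw [hswap, hcomm.eq, mul_inv_cancel_right]
        group
    _ = swap (h y) b * (h * g * h⁻¹) := by
        rw [← swap_apply_apply, mem_lowerPerms.mp hh b hb]

theorem exists_upper_mul_lower {g : Perm (Fin (n + m))}
    (hg : ∀ j : Fin (n + m), (j : ℕ) < n → (g j : ℕ) < n) :
    ∃ κ ∈ upperPerms n m, ∃ σ ∈ lowerPerms n m, κ * σ = g := by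
  set σ := Perm.ofSubtype (g.subtypePermOfFintype (p := fun j : Fin (n + m) => (j : ℕ) < n) hg)
  have hσ : σ ∈ lowerPerms n m :=
    mem_lowerPerms.mpr fun j hj => Perm.ofSubtype_apply_of_not_mem _ (by omega)
  refine ⟨g * σ⁻¹, mem_upperPerms.mpr fun j hj => ?_, σ, hσ, inv_mul_cancel_right g σ⟩
  have hσj : ((σ⁻¹ j : Fin (n + m)) : ℕ) < n :=
    (apply_lt_iff_of_mem_lowerPerms (inv_mem hσ)).mpr hj
  have hgσ : σ (σ⁻¹ j) = g (σ⁻¹ j) :=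
    Perm.ofSubtype_apply_of_mem (p := fun j : Fin (n + m) => (j : ℕ) < n) _ hσj
  rw [Perm.mul_apply, ← hgσ, Perm.coe_inv, apply_symm_apply]

/-- `M` lists the terms of the element `Q_g`, with multiplicity. -/
def HasLeadingClass (M : Multiset (Perm (Fin (n + m)))) (g : Perm (Fin (n + m))) : Prop :=
  (M.map (of ℂ _)).sum ∈ Algebra.adjoin ℂ (generators n m) ∧ g ∈ M ∧
    ∀ τ ∈ M, #(lowerSupport n τ) < #(lowerSupport n g) ∨
      ∃ h ∈ lowerPerms n m, h * g * h⁻¹ = τ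

theorem HasLeadingClass.swap_mul {M : Multiset (Perm (Fin (n + m)))} {g : Perm (Fin (n + m))}
    (hM : HasLeadingClass M g) {x b : Fin (n + m)} (hx : (x : ℕ) < n) (hb : n ≤ (b : ℕ))
    (hgx : g x = x) :
    HasLeadingClass ((lowerLetters n m).val.bind fun i => M.map (swap i b * ·))
      (swap x b * g) := by
  obtain ⟨hMA, hgM, hMlead⟩ := hM
  have hdeg : #(lowerSupport n (swap x b * g)) = #(lowerSupport n g) + 1 := by
    rw [lowerSupport_swap_mul_of_apply_eq hx hb hgx,
      Finset.card_insert_of_notMem fun h => (mem_lowerSupport.mp h).2 hgx]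
  refine ⟨?_, Multiset.mem_bind.mpr
    ⟨x, by simp [lowerLetters, hx], Multiset.mem_map_of_mem _ hgM⟩, fun τ hτ => ?_⟩
  · rw [Multiset.map_bind, Multiset.sum_bind]
    simp only [Multiset.map_map, Function.comp_def, map_mul, Multiset.sum_map_mul_left]
    rw [← Finset.sum_eq_multiset_sum, ← Finset.sum_mul]
    exact mul_mem (sum_of_swap_mem_adjoin_generators hb) hMA
  obtain ⟨i, hi, τ', hτ', rfl⟩ :
      ∃ i ∈ lowerLetters n m, ∃ τ' ∈ M, swap i b * τ' = τ := by
    simpa using hτ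
  have hle := Finset.card_le_card (lowerSupport_swap_mul_subset (i := i) (g := τ') hb)
  rcases hMlead τ' hτ' with hlt | ⟨h, hh, rfl⟩
  · have := Finset.card_insert_le i (lowerSupport n τ')
    exact Or.inl (by omega)
  by_cases hiτ : i ∈ lowerSupport n (h * g * h⁻¹)
  · left
    rw [Finset.insert_eq_of_mem hiτ, card_lowerSupport_conj hh] at hle
    omega
  · right
    have hi' : (i : ℕ) < n := by simpa [lowerLetters] using hi
    have hy : ((h⁻¹ i : Fin (n + m)) : ℕ) < n :=
      (apply_lt_iff_of_mem_lowerPerms (inv_mem hh)).mpr hi'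
    have hgy : g (h⁻¹ i) = h⁻¹ i := by
      have : (h * g * h⁻¹) i = i := by simpa [mem_lowerSupport, hi'] using hiτ
      rwa [Perm.mul_apply, Perm.mul_apply, ← Perm.eq_inv_iff_eq] at this
    refine ⟨h * swap x (h⁻¹ i), mul_mem hh (swap_mem_lowerPerms hx hy), ?_⟩
    rw [conj_swap_mul hh hx hy hb hgx hgy, Perm.coe_inv, apply_symm_apply]

theorem exists_hasLeadingClass_of_forall_lt {g : Perm (Fin (n + m))}
    (hg : ∀ j : Fin (n + m), (j : ℕ) < n → (g j : ℕ) < n) : ∃ M, HasLeadingClass M g := by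
  classical
  obtain ⟨κ, hκ, σ, hσ, rfl⟩ := exists_upper_mul_lower hg
  refine ⟨Finset.univ.val.map fun h : lowerPerms n m => h * (κ * σ) * h⁻¹, ?_,
    Multiset.mem_map.mpr ⟨1, Finset.mem_univ _, by simp⟩, fun τ hτ => ?_⟩
  · have hconj (h : lowerPerms n m) :
        (h : Perm (Fin (n + m))) * (κ * σ) * h⁻¹ = κ * (h * σ * h⁻¹) := by
      rw [← mul_assoc, (commute_of_mem_lowerPerms_of_mem_upperPerms h.2 hκ).eq]
      group
    rw [Multiset.map_map, ← Finset.sum_eq_multiset_sum]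
    simp only [Function.comp_apply, hconj, map_mul (of ℂ _) κ, ← Finset.mul_sum]
    refine mul_mem (of_mem_adjoin_generators hκ)
      (mem_adjoin_generators_of_mem_centralizer (Subalgebra.sum_mem _ fun h _ => ?_)
        (sum_of_conj_mem_centralizer _ σ))
    rw [lowerGroupAlgebra_eq_adjoin]
    exact Algebra.subset_adjoin ⟨_, mul_mem (mul_mem h.2 hσ) (inv_mem h.2), rfl⟩
  · obtain ⟨h, -, rfl⟩ := Multiset.mem_map.mp hτ
    exact Or.inr ⟨h, h.2, rfl⟩

theorem exists_hasLeadingClass (g : Perm (Fin (n + m))) : ∃ M, HasLeadingClass M g := by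
  by_cases hg : ∃ x : Fin (n + m), (x : ℕ) < n ∧ n ≤ (g x : ℕ)
  · obtain ⟨x, hx, hgx⟩ := hg
    have hx' : (swap x (g x) * g) x = x := by simp
    have hdeg := lowerSupport_swap_mul_of_apply_eq hx hgx hx'
    rw [swap_mul_self_mul] at hdeg
    have : #(lowerSupport n (swap x (g x) * g)) < #(lowerSupport n g) := by
      rw [hdeg, Finset.card_insert_of_notMem fun h => (mem_lowerSupport.mp h).2 hx']
      exact Nat.lt_succ_self _
    obtain ⟨M, hM⟩ := exists_hasLeadingClass (swap x (g x) * g)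
    exact ⟨_, swap_mul_self_mul x (g x) g ▸ hM.swap_mul hx hgx hx'⟩
  · push Not at hg
    exact exists_hasLeadingClass_of_forall_lt hg
termination_by #(lowerSupport n g)

end Olshanskii

open Olshanskii in
/-- **Olshanskii's Lemma.**  The centralizer `Z_{n,m}` of `ℂ[S_n]` in `ℂ[S_{n+m}]` is
generated as a `ℂ`-algebra by (a) the images of the permutations in the subgroup
`S'_m` of permutations fixing `1, …, n` pointwise, (b) the center `Z_n` of `ℂ[S_n]`,
and (c) the Jucys–Murphy elements `L_{n+1}, …, L_{n+m}` (0-indexed: `JM (n+m) k` for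
`n ≤ k`). -/
theorem olshanskii_lemma (n m : ℕ) :
    Algebra.adjoin ℂ
      ({a | ∃ σ : Equiv.Perm (Fin (n + m)),
          (∀ j : Fin (n + m), (j : ℕ) < n → σ j = j) ∧
          a = MonoidAlgebra.of ℂ (Equiv.Perm (Fin (n + m))) σ} ∪
        {z | z ∈ lowerGroupAlgebra n m ∧
          ∀ w ∈ lowerGroupAlgebra n m, z * w = w * z} ∪
        {a | ∃ k : Fin (n + m), n ≤ (k : ℕ) ∧ a = JM (n + m) k}) =
      Subalgebra.centralizer ℂ
        ((lowerGroupAlgebra n m : Set (MonoidAlgebra ℂ (Equiv.Perm (Fin (n + m)))))) := by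
  rw [centralizer_lowerGroupAlgebra]
  refine le_antisymm adjoin_generators_le_centralizer
    (centralizer_le_of_forall_exists_lead adjoin_generators_le_centralizer
      (fun g => #(lowerSupport n g)) fun g => ?_)
  obtain ⟨M, hMA, hgM, hMlead⟩ := exists_hasLeadingClass g
  refine ⟨_, hMA, ?_, fun τ hτ => hMlead τ ?_⟩
  · rw [coeff_sum_map_of, Nat.cast_ne_zero, Multiset.count_ne_zero]
    exact hgM
  · rwa [Finsupp.mem_support_iff, coeff_sum_map_of, Nat.cast_ne_zero,
      Multiset.count_ne_zero] at hτ
end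

section
/- Let B ⊆ A be finite-dimensional semisimple ℂ-algebras and let C be the centralizer of B in A. Let V be a simple A-module and W a simple B-module. Give Hom_B(W, V) (here V is regarded as a B-module by restriction) the C-module structure (c·f)(w) = c·f(w). If Hom_B(W, V) is nonzero, then it is a simple C-module. -/
section

variable {A : Type*} [Ring A] [Algebra ℂ A]
variable {V : Type*} [AddCommGroup V] [Module ℂ V] [Module A V] [IsScalarTower ℂ A V]
variable {W : Type*} [AddCommGroup W] [Module ℂ W]

/-- For a subalgebra `B ⊆ A`, the space `Hom_B(W, V)` of `B`-module maps from `W` to the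
restriction of the `A`-module `V` to `B`, realized as a `ℂ`-subspace of `Hom_ℂ(W, V)`. -/
def homB (B : Subalgebra ℂ A) [Module B W] [IsScalarTower ℂ B W] :
    Submodule ℂ (W →ₗ[ℂ] V) where
  carrier := {f | ∀ (b : B) (w : W), f (b • w) = (b : A) • f w}
  add_mem' := by
    intro f g hf hg b w
    simp [hf b w, hg b w, smul_add]
  zero_mem' := by intro b w; simp
  smul_mem' := by
    intro c f hf b w
    rw [LinearMap.smul_apply, LinearMap.smul_apply, hf b w]
    exact smul_comm c ((b : A)) (f w)

/-- The action of an element `c ∈ A` on `Hom_ℂ(W, V)` by postcomposition,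
`(c • f) w = c • (f w)`. -/
def postSmul (c : A) (f : W →ₗ[ℂ] V) : W →ₗ[ℂ] V where
  toFun w := c • f w
  map_add' w₁ w₂ := by simp [smul_add]
  map_smul' r w := by
    simp only [map_smul, RingHom.id_apply]
    exact smul_comm c r (f w)

end

/-! Let `f ∈ Hom_B(W, V)` be nonzero and `g ∈ Hom_B(W, V)` arbitrary. Since `W` is simple, `f`
is injective, and since `V` is a semisimple `B`-module, `g = φ ∘ f` for some `φ ∈ End_B(V)`.
By Schur's lemma over `ℂ` and Jacobson density, `φ` is the action of some `a ∈ A`, which commutes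
with `B` modulo the annihilator of `V`. In the semisimple ring `A` this two-sided ideal is generated
by a central idempotent `e`, so `c = (1 - e) a` lies in the centralizer `C` and still acts on `V`
as `φ`. Thus `g = c • f`: every nonzero element of `Hom_B(W, V)` generates it over `C`. -/

theorem IsSemisimpleRing.eq_zero_of_forall_mul_mul_eq_zero {R : Type*} [Ring R]
    [IsSemisimpleRing R] {y : R} (hy : ∀ r, y * r * y = 0) : y = 0 := by
  obtain ⟨g, hg, hspan⟩ := IsSemisimpleRing.ideal_eq_span_idempotent (Ideal.span {y})
  obtain ⟨r, hr⟩ := Ideal.mem_span_singleton'.mp (hspan ▸ Ideal.mem_span_singleton_self g)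
  obtain ⟨s, hs⟩ :=
    Ideal.mem_span_singleton'.mp (hspan.symm ▸ Ideal.mem_span_singleton_self y)
  have hg0 : g = 0 :=
    calc g = g * g := hg.eq.symm
      _ = r * (y * r * y) := by rw [← hr]; simp only [mul_assoc]
      _ = 0 := by rw [hy, mul_zero]
  rw [← hs, hg0, mul_zero]

theorem IsSemisimpleRing.exists_isIdempotentElem_mem_center_eq_span {R : Type*} [Ring R]
    [IsSemisimpleRing R] (I : Ideal R) [I.IsTwoSided] :
    ∃ e : R, IsIdempotentElem e ∧ e ∈ Set.center R ∧ I = Ideal.span {e} := by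
  obtain ⟨e, he, rfl⟩ := IsSemisimpleRing.ideal_eq_span_idempotent I
  have hexe (x : R) : e * x * e = e * x := by
    obtain ⟨r, hr⟩ := Ideal.mem_span_singleton'.mp <|
      (Ideal.span {e}).mul_mem_right x (Ideal.mem_span_singleton_self e)
    rw [← hr, mul_assoc, he.eq]
  refine ⟨e, he, Semigroup.mem_center_iff.mpr fun x => ?_, rfl⟩
  have hx : (1 - e) * x * e = 0 := by
    refine IsSemisimpleRing.eq_zero_of_forall_mul_mul_eq_zero fun r => ?_
    have her : e * r * (1 - e) = 0 := by rw [mul_sub, mul_one, hexe, sub_self]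
    calc (1 - e) * x * e * r * ((1 - e) * x * e) = (1 - e) * x * (e * r * (1 - e)) * x * e := by
          simp only [mul_assoc]
      _ = 0 := by rw [her, mul_zero, zero_mul, zero_mul]
  rwa [sub_mul, sub_mul, one_mul, hexe, sub_eq_zero] at hx

theorem IsSemisimpleRing.exists_mem_centralizer_smul_eq {R M : Type*} [Ring R] [IsSemisimpleRing R]
    [AddCommGroup M] [Module R M] (S : Set R) (a : R)
    (ha : ∀ s ∈ S, ∀ m : M, a • s • m = s • a • m) :
    ∃ c ∈ S.centralizer, ∀ m : M, c • m = a • m := by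
  obtain ⟨e, he, he_mem, hspan⟩ :=
    IsSemisimpleRing.exists_isIdempotentElem_mem_center_eq_span (Module.annihilator R M)
  have heM (m : M) : e • m = 0 :=
    Module.mem_annihilator.mp (hspan ▸ Ideal.mem_span_singleton_self e) m
  have hcomm (x : R) : (1 - e) * x = x * (1 - e) := by
    rw [mul_sub, sub_mul, mul_one, one_mul, Semigroup.mem_center_iff.mp he_mem]
  refine ⟨(1 - e) * a, Set.mem_centralizer_iff.mpr fun s hs => ?_, fun m => ?_⟩
  · obtain ⟨r, hr⟩ : ∃ r, r * e = a * s - s * a := Ideal.mem_span_singleton'.mp <| hspan ▸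
      Module.mem_annihilator.mpr fun m => by rw [sub_smul, mul_smul, mul_smul, ha s hs, sub_self]
    have hkill : (1 - e) * (a * s - s * a) = 0 := by
      rw [← hr, ← mul_assoc, hcomm, mul_assoc, sub_mul, one_mul, he.eq, sub_self, mul_zero]
    calc s * ((1 - e) * a) = (1 - e) * (s * a) := by rw [← mul_assoc, ← hcomm, mul_assoc]
      _ = (1 - e) * (a * s) := by rw [mul_sub, sub_eq_zero] at hkill; exact hkill.symm
      _ = (1 - e) * a * s := (mul_assoc ..).symm
  · rw [mul_smul, sub_smul, one_smul, heM, sub_zero]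

theorem IsSimpleModule.lsmul_surjective_of_isAlgClosed {k A V : Type*} [Field k] [IsAlgClosed k]
    [Ring A] [Algebra k A] [FiniteDimensional k A] [AddCommGroup V] [Module k V] [Module A V]
    [IsScalarTower k A V] [IsSimpleModule A V] :
    Function.Surjective (Algebra.lsmul k k V : A →ₐ[k] Module.End k V) := by
  have : FiniteDimensional k V := Module.Finite.trans A V
  have : Module.Finite (Module.End A V) V := .of_restrictScalars_finite k _ _
  intro φ
  have hcomm (ψ : Module.End A V) (v : V) : φ (ψ v) = ψ (φ v) := by
    obtain ⟨t, rfl⟩ :=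
      (IsSimpleModule.algebraMap_end_bijective_of_isAlgClosed k (A := A) (V := V)).2 ψ
    simp
  obtain ⟨a, ha⟩ := Module.Finite.toModuleEnd_moduleEnd_surjective (R := A) (M := V)
    { toFun := φ, map_add' := φ.map_add, map_smul' := hcomm }
  exact ⟨a, LinearMap.ext fun v => congr($ha v)⟩

section

variable {A : Type*} [Ring A] [Algebra ℂ A]
variable {V : Type*} [AddCommGroup V] [Module ℂ V] [Module A V] [IsScalarTower ℂ A V]
variable {W : Type*} [AddCommGroup W] [Module ℂ W]
variable {B : Subalgebra ℂ A} [Module B W] [IsScalarTower ℂ B W]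

def homB.toLinearMap {f : W →ₗ[ℂ] V} (hf : f ∈ homB B) : W →ₗ[B] V :=
  { f with map_smul' := hf }

theorem exists_mem_centralizer_postSmul_eq [FiniteDimensional ℂ A] [IsSemisimpleRing A]
    [IsSemisimpleRing B] [IsSimpleModule A V] [IsSimpleModule B W] {f g : W →ₗ[ℂ] V}
    (hf : f ∈ homB B) (hf0 : f ≠ 0) (hg : g ∈ homB B) :
    ∃ c ∈ Subalgebra.centralizer ℂ (B : Set A), postSmul c f = g := by
  have hinj : Function.Injective (homB.toLinearMap hf) :=
    (homB.toLinearMap hf).injective_or_eq_zero.resolve_right fun h =>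
      hf0 (LinearMap.ext fun w => congr($h w))
  obtain ⟨φ, hφ⟩ := IsSemisimpleModule.extension_property _ hinj (homB.toLinearMap hg)
  obtain ⟨a, ha⟩ :=
    IsSimpleModule.lsmul_surjective_of_isAlgClosed (A := A) (φ.restrictScalars ℂ)
  have ha' (v : V) : a • v = φ v := congr($ha v)
  obtain ⟨c, hc, hca⟩ := IsSemisimpleRing.exists_mem_centralizer_smul_eq (M := V) (B : Set A) a
    fun b hb v => by rw [ha', ha']; exact φ.map_smul ⟨b, hb⟩ v
  exact ⟨c, hc, LinearMap.ext fun w => (hca (f w)).trans <| (ha' _).trans congr($hφ w)⟩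

end

theorem hom_space_simple_over_centralizer_general
    (A : Type*) [Ring A] [Algebra ℂ A] [FiniteDimensional ℂ A] [IsSemisimpleRing A]
    (B : Subalgebra ℂ A) [IsSemisimpleRing B]
    (V : Type*) [AddCommGroup V] [Module ℂ V] [Module A V] [IsScalarTower ℂ A V]
    [IsSimpleModule A V]
    (W : Type*) [AddCommGroup W] [Module ℂ W] [Module B W] [IsScalarTower ℂ B W]
    [IsSimpleModule B W] :
    ∀ p : Submodule ℂ (W →ₗ[ℂ] V),
      p ≤ homB (V := V) (W := W) B →
      (∀ c ∈ Subalgebra.centralizer ℂ (B : Set A), ∀ f ∈ p, postSmul c f ∈ p) →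
      p = ⊥ ∨ p = homB (V := V) (W := W) B := by
  intro p hp hstab
  refine or_iff_not_imp_left.mpr fun hp0 => le_antisymm hp fun g hg => ?_
  obtain ⟨f, hfp, hf0⟩ := (Submodule.ne_bot_iff p).mp hp0
  obtain ⟨c, hc, rfl⟩ := exists_mem_centralizer_postSmul_eq (hp hfp) hf0 hg
  exact hstab c hc f hfp

/-- Let `B ⊆ A` be finite-dimensional semisimple `ℂ`-algebras and let `C` be the
centralizer of `B` in `A`.  If `V` is a simple `A`-module and `W` a simple `B`-module,
and the space `Hom_B(W, V)` (with `C`-action `(c • f) w = c • f w`) is nonzero, then it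
is a simple `C`-module: any `ℂ`-subspace of `Hom_B(W, V)` stable under the action of
every `c ∈ C` is `0` or all of `Hom_B(W, V)`. -/
theorem hom_space_simple_over_centralizer
    (A : Type*) [Ring A] [Algebra ℂ A] [FiniteDimensional ℂ A] [IsSemisimpleRing A]
    (B : Subalgebra ℂ A) [IsSemisimpleRing B]
    (V : Type*) [AddCommGroup V] [Module ℂ V] [Module A V] [IsScalarTower ℂ A V]
    [IsSimpleModule A V]
    (W : Type*) [AddCommGroup W] [Module ℂ W] [Module B W] [IsScalarTower ℂ B W]
    [IsSimpleModule B W]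
    (hne : (homB (V := V) (W := W) B) ≠ ⊥) :
    ∀ p : Submodule ℂ (W →ₗ[ℂ] V),
      p ≤ homB (V := V) (W := W) B →
      (∀ c ∈ Subalgebra.centralizer ℂ (B : Set A), ∀ f ∈ p, postSmul c f ∈ p) →
      p = ⊥ ∨ p = homB (V := V) (W := W) B :=
  hom_space_simple_over_centralizer_general A B V W
end

section
/- Let H₂ be the associative unital ℂ-algebra with generators s, x, y and relations xy = yx, s² = 1, sx = ys − 1 (the rank two degenerate affine Hecke algebra). Then every finite-dimensional irreducible H₂-module is isomorphic to L(a,b) for some a, b ∈ ℂ with either b = a ± 1 or a ≠ b ± 1; in particular every finite-dimensional irreducible H₂-module has dimension 1 or 2. -/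
/-!
`X + Y` commutes with `S`, `X` and `Y`, so by Schur's lemma it acts on an irreducible module by a
scalar `c`. Hence an eigenvector `v` of `X`, with eigenvalue `a`, is also an eigenvector of `Y`,
with eigenvalue `b = c - a`, and the relations give `X (S v) = b • S v - v`,
`Y (S v) = a • S v + v`, so `v` and `S v` span the module. If `S v = μ • v`, then `μ = ±1` and
`b = a + μ`. Otherwise `(v, S v)` is a basis, and `a = b + ε` with `ε = ±1` is impossible, since
then `v + ε • S v` would span a one-dimensional submodule.
-/

open Module Submodule

section invtSubmodule

variable {R M : Type*} [Semiring R] [AddCommMonoid M] [Module R M] {f : End R M}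

theorem Submodule.span_mem_invtSubmodule {s : Set M} (h : ∀ x ∈ s, f x ∈ span R s) :
    span R s ∈ f.invtSubmodule :=
  span_le.2 h

theorem Submodule.span_singleton_mem_invtSubmodule {u : M} {α : R} (h : f u = α • u) :
    (R ∙ u) ∈ f.invtSubmodule :=
  span_mem_invtSubmodule <| by
    rintro x rfl
    rw [h]
    exact smul_mem _ _ (mem_span_singleton_self x)

theorem Submodule.span_pair_mem_invtSubmodule {u w : M} (hu : f u ∈ span R {u, w})
    (hw : f w ∈ span R {u, w}) : span R {u, w} ∈ f.invtSubmodule :=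
  span_mem_invtSubmodule <| by rintro x (rfl | rfl) <;> assumption

end invtSubmodule

section Field

variable {K V : Type*} [Field K] [AddCommGroup V] [Module K V]

def IsIrreducibleTriple (S X Y : End K V) : Prop :=
  ∀ p : Submodule K V, p ∈ S.invtSubmodule → p ∈ X.invtSubmodule → p ∈ Y.invtSubmodule →
    p = ⊥ ∨ p = ⊤

namespace IsIrreducibleTriple

variable {S X Y : End K V}

theorem eq_top_of_mem (h : IsIrreducibleTriple S X Y) {p : Submodule K V}
    (hS : p ∈ S.invtSubmodule) (hX : p ∈ X.invtSubmodule) (hY : p ∈ Y.invtSubmodule)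
    {u : V} (hu : u ∈ p) (hu0 : u ≠ 0) : p = ⊤ :=
  (h p hS hX hY).resolve_left fun hp ↦ hu0 <| by rwa [hp, mem_bot] at hu

theorem finrank_eq_one_of_eigenvector (h : IsIrreducibleTriple S X Y) {u : V} (hu0 : u ≠ 0)
    {α β γ : K} (hS : S u = α • u) (hX : X u = β • u) (hY : Y u = γ • u) : finrank K V = 1 :=
  (finrank_eq_one_iff_of_nonzero u hu0).2 <|
    h.eq_top_of_mem (span_singleton_mem_invtSubmodule hS) (span_singleton_mem_invtSubmodule hX)
      (span_singleton_mem_invtSubmodule hY) (mem_span_singleton_self u) hu0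

/-- Schur's lemma. -/
theorem exists_forall_apply_eq_smul [IsAlgClosed K] [FiniteDimensional K V] [Nontrivial V]
    (h : IsIrreducibleTriple S X Y) {Z : End K V} (hS : Commute Z S) (hX : Commute Z X)
    (hY : Commute Z Y) : ∃ c : K, ∀ v, Z v = c • v := by
  obtain ⟨c, hc⟩ := Z.exists_eigenvalue
  have htop : Z.eigenspace c = ⊤ :=
    (h _ (End.mapsTo_genEigenspace_of_comm hS c 1) (End.mapsTo_genEigenspace_of_comm hX c 1)
      (End.mapsTo_genEigenspace_of_comm hY c 1)).resolve_left hc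
  exact ⟨c, fun v ↦ End.mem_eigenspace_iff.1 (htop ▸ mem_top)⟩

end IsIrreducibleTriple

namespace DegenerateAffineHecke

variable {S X Y : End K V}

theorem X_mul_S (hs : S * S = 1) (hrel : S * X = Y * S - 1) : X * S = S * Y - 1 :=
  calc X * S = S * (S * X) * S := by rw [← mul_assoc, hs, one_mul]
    _ = S * Y * (S * S) - S * S := by rw [hrel]; noncomm_ring
    _ = S * Y - 1 := by rw [hs, mul_one]

theorem Y_mul_S (hrel : S * X = Y * S - 1) : Y * S = S * X + 1 := by
  rw [hrel, sub_add_cancel]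

theorem commute_add_S (hs : S * S = 1) (hrel : S * X = Y * S - 1) : Commute (X + Y) S := by
  show (X + Y) * S = S * (X + Y)
  rw [add_mul, X_mul_S hs hrel, Y_mul_S hrel, mul_add]
  abel

theorem S_apply_S_apply (hs : S * S = 1) (v : V) : S (S v) = v :=
  congr($hs v)

theorem X_apply_S_apply (hs : S * S = 1) (hrel : S * X = Y * S - 1) {v : V} {b : K}
    (hY : Y v = b • v) : X (S v) = b • S v - v := by
  simpa [hY] using congr($(X_mul_S hs hrel) v)

theorem Y_apply_S_apply (hrel : S * X = Y * S - 1) {v : V} {a : K} (hX : X v = a • v) :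
    Y (S v) = a • S v + v := by
  simpa [hX] using congr($(Y_mul_S hrel) v)

theorem exists_common_eigenvector [IsAlgClosed K] [FiniteDimensional K V] [Nontrivial V]
    (hirr : IsIrreducibleTriple S X Y) (hcomm : Commute X Y) (hs : S * S = 1)
    (hrel : S * X = Y * S - 1) : ∃ (a b : K) (v : V), v ≠ 0 ∧ X v = a • v ∧ Y v = b • v := by
  obtain ⟨c, hc⟩ := hirr.exists_forall_apply_eq_smul (commute_add_S hs hrel)
    ((Commute.refl X).add_left hcomm.symm) (hcomm.add_left (Commute.refl Y))
  obtain ⟨a, ha⟩ := X.exists_eigenvalue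
  obtain ⟨v, hv⟩ := ha.exists_hasEigenvector
  refine ⟨a, c - a, v, hv.2, hv.apply_eq_smul, ?_⟩
  rw [sub_smul, ← hv.apply_eq_smul, ← hc v, LinearMap.add_apply, add_sub_cancel_left]

theorem span_pair_S_eq_top (hirr : IsIrreducibleTriple S X Y) (hs : S * S = 1)
    (hrel : S * X = Y * S - 1) {v : V} (hv : v ≠ 0) {a b : K} (hX : X v = a • v)
    (hY : Y v = b • v) : span K {v, S v} = ⊤ := by
  have h0 : v ∈ span K {v, S v} := subset_span (Set.mem_insert _ _)
  have h1 : S v ∈ span K {v, S v} := subset_span (Set.mem_insert_of_mem _ rfl)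
  refine hirr.eq_top_of_mem (span_pair_mem_invtSubmodule h1 ?_) (span_pair_mem_invtSubmodule ?_ ?_)
    (span_pair_mem_invtSubmodule ?_ ?_) h0 hv
  · rwa [S_apply_S_apply hs]
  · rw [hX]; exact smul_mem _ _ h0
  · rw [X_apply_S_apply hs hrel hY]; exact sub_mem (smul_mem _ _ h1) h0
  · rw [hY]; exact smul_mem _ _ h0
  · rw [Y_apply_S_apply hrel hX]; exact add_mem (smul_mem _ _ h1) h0

theorem eigenvalues_of_S_apply_eq_smul (hs : S * S = 1) (hrel : S * X = Y * S - 1) {v : V}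
    (hv : v ≠ 0) {a b μ : K} (hX : X v = a • v) (hY : Y v = b • v) (hS : S v = μ • v) :
    (b = a + 1 ∧ S v = v) ∨ (b = a - 1 ∧ S v = -v) := by
  have hμ : μ * μ = 1 := smul_left_injective K hv <| by
    have := S_apply_S_apply hs v
    rw [hS, map_smul, hS] at this
    simpa [mul_smul] using this
  have hab : μ * a = μ * b - 1 := smul_left_injective K hv <| by
    have := X_apply_S_apply hs hrel hY
    rw [hS, map_smul, hX] at this
    linear_combination (norm := module) this
  rcases mul_self_eq_one_iff.1 hμ with rfl | rfl
  · left; constructor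
    · linear_combination -hab
    · rw [hS, one_smul]
  · right; constructor
    · linear_combination hab
    · rw [hS, neg_one_smul]

theorem ne_add_of_linearIndependent [FiniteDimensional K V] (hirr : IsIrreducibleTriple S X Y)
    (hs : S * S = 1) (hrel : S * X = Y * S - 1) {v : V} (hind : LinearIndependent K ![v, S v])
    {a b ε : K} (hX : X v = a • v) (hY : Y v = b • v) (hε : ε * ε = 1) : a ≠ b + ε := by
  intro hab
  have hu : v + ε • S v ≠ 0 := fun h ↦
    one_ne_zero (LinearIndependent.pair_iff.1 hind 1 ε (by rwa [one_smul])).1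
  have h1 := hirr.finrank_eq_one_of_eigenvector hu (α := ε) (β := b) (γ := a)
    (by rw [map_add, map_smul, S_apply_S_apply hs]; linear_combination (norm := module) -hε • S v)
    (by rw [map_add, map_smul, X_apply_S_apply hs hrel hY, hX, hab]; module)
    (by rw [map_add, map_smul, Y_apply_S_apply hrel hX, hY, hab]; module)
  have h2 := hind.fintype_card_le_finrank
  simp [h1] at h2

end DegenerateAffineHecke

end Field

open DegenerateAffineHecke in
/-- Classification of the finite-dimensional irreducible modules over the rank two
degenerate affine Hecke algebra `H₂ = ⟨s, x, y | xy = yx, s² = 1, sx = ys − 1⟩`.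

Since `H₂` is presented by generators and relations, an `H₂`-module is the same thing as
a `ℂ`-vector space `V` together with endomorphisms `S, X, Y` satisfying
`X Y = Y X`, `S² = 1`, `S X = Y S − 1`; it is irreducible iff `V ≠ 0` and no proper
nonzero subspace is invariant under `S, X, Y`.

Conclusion: every finite-dimensional irreducible `H₂`-module is isomorphic to `L(a,b)`
for some `a, b ∈ ℂ`: either it is 1-dimensional, spanned by a vector `v` with
`X v = a v`, `Y v = b v` and (`b = a + 1`, `S v = v`) or (`b = a − 1`, `S v = −v`)
(these are the modules `L(a, a±1)`); or it is 2-dimensional with `a ≠ b ± 1` and has a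
basis `(v₁, v₂)` in which `X, Y, S` act by the matrices `[[a, −1],[0, b]]`,
`[[b, 1],[0, a]]`, `[[0, 1],[1, 0]]` (the module `L(a,b)`).  In particular every
finite-dimensional irreducible `H₂`-module has dimension 1 or 2. -/
theorem degenerate_affine_hecke_rank_two_simple_modules
    (V : Type*) [AddCommGroup V] [Module ℂ V] [FiniteDimensional ℂ V]
    (S X Y : Module.End ℂ V)
    (hcomm : X * Y = Y * X) (hs : S * S = 1) (hrel : S * X = Y * S - 1)
    (hnz : ∃ v : V, v ≠ 0)
    (hirr : ∀ p : Submodule ℂ V,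
      (∀ v ∈ p, S v ∈ p) → (∀ v ∈ p, X v ∈ p) → (∀ v ∈ p, Y v ∈ p) →
      p = ⊥ ∨ p = ⊤) :
    (Module.finrank ℂ V = 1 ∨ Module.finrank ℂ V = 2) ∧
    ((Module.finrank ℂ V = 1 ∧
      ∃ (a b : ℂ) (v : V), v ≠ 0 ∧ X v = a • v ∧ Y v = b • v ∧
        ((b = a + 1 ∧ S v = v) ∨ (b = a - 1 ∧ S v = -v))) ∨
     (∃ (a b : ℂ), a ≠ b + 1 ∧ a ≠ b - 1 ∧
      ∃ B : Module.Basis (Fin 2) ℂ V,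
        X (B 0) = a • B 0 ∧ X (B 1) = b • B 1 - B 0 ∧
        Y (B 0) = b • B 0 ∧ Y (B 1) = a • B 1 + B 0 ∧
        S (B 0) = B 1 ∧ S (B 1) = B 0)) := by
  have hirr : IsIrreducibleTriple S X Y := hirr
  obtain ⟨w, hw⟩ := hnz
  have : Nontrivial V := nontrivial_of_ne w 0 hw
  obtain ⟨a, b, v, hv, hX, hY⟩ := exists_common_eigenvector hirr hcomm hs hrel
  by_cases hSv : ∃ μ : ℂ, μ • v = S v
  · obtain ⟨μ, hμ⟩ := hSv
    have h1 := hirr.finrank_eq_one_of_eigenvector hv hμ.symm hX hY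
    exact ⟨Or.inl h1, Or.inl ⟨h1, a, b, v, hv, hX, hY,
      eigenvalues_of_S_apply_eq_smul hs hrel hv hX hY hμ.symm⟩⟩
  · have hind := (LinearIndependent.pair_iff' hv).2 (not_exists.1 hSv)
    let B := Basis.mk hind <| by
      rw [Matrix.range_cons_cons_empty, span_pair_S_eq_top hirr hs hrel hv hX hY]
    have hB0 : B 0 = v := Basis.mk_apply ..
    have hB1 : B 1 = S v := Basis.mk_apply ..
    refine ⟨Or.inr (by rw [finrank_eq_card_basis B, Fintype.card_fin]),
      Or.inr ⟨a, b, ne_add_of_linearIndependent hirr hs hrel hind hX hY (one_mul 1), ?_, B, ?_⟩⟩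
    · simpa [sub_eq_add_neg] using ne_add_of_linearIndependent hirr hs hrel hind hX hY (ε := -1)
    · rw [hB0, hB1]
      exact ⟨hX, X_apply_S_apply hs hrel hY, hY, Y_apply_S_apply hrel hX, rfl, S_apply_S_apply hs v⟩
end

section
/- Let λ be a partition of n and T a standard λ-tableau. Then there exists a sequence of admissible transpositions s_{k_1}, …, s_{k_ℓ} (applied successively, each yielding a standard λ-tableau) transforming T into the canonical tableau T(λ), and these can be chosen so that ℓ equals the Coxeter length of the permutation s_{k_1} s_{k_2} ⋯ s_{k_ℓ} in S_n. -/
/-- `T : Fin n → ℕ × ℕ` is a standard tableau of shape `λ` (a Young diagram with `n`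
cells): `T` is a bijection from 0-indexed entries onto the cells of `λ` such that
entries increase along rows and down columns. -/
def IsStandardTableau (μ : YoungDiagram) (n : ℕ) (T : Fin n → ℕ × ℕ) : Prop :=
  Function.Injective T ∧ Set.range T = (μ.cells : Set (ℕ × ℕ)) ∧
    ∀ j k : Fin n,
      (((T k).1 = (T j).1 ∧ (T k).2 = (T j).2 + 1) ∨
       ((T k).1 = (T j).1 + 1 ∧ (T k).2 = (T j).2)) → j < k

/-- The content `s − r` of a box `(r, s)`. -/
def boxContent (p : ℕ × ℕ) : ℤ := (p.2 : ℤ) - (p.1 : ℤ)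

/-- The Coxeter length of a permutation of `Fin n`: the minimal number of adjacent
transpositions `(a, a+1)` whose product is `w`. -/
noncomputable def coxeterLength (n : ℕ) (w : Equiv.Perm (Fin n)) : ℕ :=
  sInf {m | ∃ l : List (Equiv.Perm (Fin n)), l.length = m ∧
    (∀ x ∈ l, ∃ a b : Fin n, (b : ℕ) = (a : ℕ) + 1 ∧ x = Equiv.swap a b) ∧
    l.prod = w}

/-!
Order the boxes lexicographically (row by row); `T(λ)` is the unique tableau whose entries
increase in this order. If `T` is not `T(λ)`, some entry `k + 1` comes lexicographically before
`k`, and standardness forces the box of `k + 1` to lie strictly above and strictly to the right of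
that of `k`. Hence `s_k` is admissible, the result is standard, and the number of lexicographic
inversions drops by one. Iterating, `ℓ` is the number of inversions of `T`, which is the inversion
number of `w⁻¹` for the product `w` of the transpositions used. Since a simple transposition
changes the inversion number by at most one, no shorter word represents `w`.
-/

open Equiv Finset

section Inversions

variable {α : Type*} [LinearOrder α] {n : ℕ}

def inversions (f : Fin n → α) : Finset (Fin n × Fin n) :=
  {p | p.1 < p.2 ∧ f p.2 < f p.1}

@[simp]
lemma mem_inversions {f : Fin n → α} {p : Fin n × Fin n} :
    p ∈ inversions f ↔ p.1 < p.2 ∧ f p.2 < f p.1 := by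
  simp [inversions]

lemma inversions_eq_empty_iff_monotone {f : Fin n → α} : inversions f = ∅ ↔ Monotone f := by
  simp [Finset.eq_empty_iff_forall_notMem, monotone_iff_forall_lt]

lemma inversions_strictMono_comp {β : Type*} [LinearOrder β] {g : α → β} (hg : StrictMono g)
    (f : Fin n → α) : inversions (g ∘ f) = inversions f := by
  ext; simp [hg.lt_iff_lt]

lemma exists_adjacent_inversion {f : Fin n → α} (hf : ¬Monotone f) :
    ∃ a b : Fin n, (b : ℕ) = a + 1 ∧ f b < f a := by
  cases n with
  | zero => exact absurd (fun a => a.elim0) hf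
  | succ n =>
    obtain ⟨i, hi⟩ := not_forall.1 (Fin.monotone_iff_le_succ.not.1 hf)
    exact ⟨i.castSucc, i.succ, rfl, not_le.1 hi⟩

lemma lt_or_eq_of_swap_lt_swap {a b j k : Fin n} (hab : (b : ℕ) = a + 1)
    (h : swap a b j < swap a b k) : j < k ∨ (j = b ∧ k = a) := by
  simp only [swap_apply_def] at h
  split_ifs at h <;> simp only [Fin.ext_iff, Fin.lt_def] at * <;> omega

lemma card_inversions_comp_swap {f : Fin n → α} {a b : Fin n} (hab : (b : ℕ) = a + 1)
    (hf : f b < f a) : #(inversions (f ∘ swap a b)) + 1 = #(inversions f) := by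
  classical
  let e := (swap a b).prodCongr (swap a b)
  have hinv : inversions f = insert (a, b) ((inversions (f ∘ swap a b)).map e.toEmbedding) := by
    ext ⟨j, k⟩
    simp only [mem_insert, mem_map_equiv, mem_inversions, Prod.mk.injEq, e, prodCongr_symm,
      prodCongr_apply, symm_swap, Prod.map, Function.comp_apply, swap_apply_self]
    constructor
    · rintro ⟨hjk, hfjk⟩
      rcases lt_or_eq_of_swap_lt_swap hab (j := swap a b j) (k := swap a b k)
        (by simpa only [swap_apply_self]) with h | ⟨hj, hk⟩
      · exact Or.inr ⟨h, hfjk⟩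
      · exact Or.inl ⟨by simpa using congrArg (swap a b) hj, by simpa using congrArg (swap a b) hk⟩
    · rintro (⟨rfl, rfl⟩ | ⟨hjk, hfjk⟩)
      · exact ⟨Fin.lt_def.2 (by omega), hf⟩
      · rcases lt_or_eq_of_swap_lt_swap hab hjk with h | ⟨rfl, rfl⟩
        · exact ⟨h, hfjk⟩
        · exact absurd hf hfjk.not_gt
  have hab_notMem : (a, b) ∉ (inversions (f ∘ swap a b)).map e.toEmbedding := by
    simp [e, Fin.lt_def, hab]
  rw [hinv, card_insert_of_notMem hab_notMem, card_map]

lemma card_inversions_comp_swap_le (f : Fin n → α) {a b : Fin n} (hab : (b : ℕ) = a + 1) :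
    #(inversions (f ∘ swap a b)) ≤ #(inversions f) + 1 := by
  rcases lt_trichotomy (f a) (f b) with h | h | h
  · have := card_inversions_comp_swap (f := f ∘ swap a b) hab (by simpa using h)
    rw [Function.comp_assoc, ← Perm.coe_mul, swap_mul_self, Perm.coe_one, Function.comp_id] at this
    omega
  · have hfix : f ∘ swap a b = f := by
      rw [comp_swap_eq_update, h, Function.update_eq_self, ← h, Function.update_eq_self]
    rw [hfix]; omega
  · have := card_inversions_comp_swap hab h
    omega

end Inversions

section CoxeterLength

variable {n : ℕ}

def IsAdjacentSwap (x : Perm (Fin n)) : Prop :=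
  ∃ a b : Fin n, (b : ℕ) = (a : ℕ) + 1 ∧ x = swap a b

lemma card_inversions_inv_prod_le (l : List (Perm (Fin n))) (hl : ∀ x ∈ l, IsAdjacentSwap x) :
    #(inversions ⇑l.prod⁻¹) ≤ l.length := by
  induction l with
  | nil => simp [inversions_eq_empty_iff_monotone.2 monotone_id]
  | cons x l ih =>
    obtain ⟨a, b, hab, rfl⟩ := hl x List.mem_cons_self
    have hprod : ⇑(swap a b :: l).prod⁻¹ = ⇑l.prod⁻¹ ∘ swap a b := by
      simp [mul_inv_rev, swap_inv, Perm.coe_mul]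
    rw [hprod, List.length_cons]
    exact (card_inversions_comp_swap_le _ hab).trans
      (Nat.add_le_add_right (ih fun y hy => hl y (List.mem_cons_of_mem _ hy)) 1)

lemma coxeterLength_prod_eq_length (l : List (Perm (Fin n))) (hl : ∀ x ∈ l, IsAdjacentSwap x)
    (hlen : l.length ≤ #(inversions ⇑l.prod⁻¹)) : coxeterLength n l.prod = l.length := by
  refine le_antisymm (Nat.sInf_le ⟨l, rfl, hl, rfl⟩) (le_csInf ⟨_, l, rfl, hl, rfl⟩ ?_)
  rintro m ⟨l', rfl, hl', hprod⟩
  exact hlen.trans (hprod ▸ card_inversions_inv_prod_le l' hl')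

end CoxeterLength

namespace IsStandardTableau

variable {μ : YoungDiagram} {n : ℕ} {T : Fin n → ℕ × ℕ}

lemma mem (hT : IsStandardTableau μ n T) (j : Fin n) : T j ∈ μ := by
  simpa [hT.2.1] using Set.mem_range_self (f := T) j

lemma exists_eq (hT : IsStandardTableau μ n T) {p : ℕ × ℕ} (hp : p ∈ μ) : ∃ j, T j = p := by
  rw [← Set.mem_range, hT.2.1]
  simpa using hp

lemma exists_pred_of_lt (hT : IsStandardTableau μ n T) {j k : Fin n} (h : T j < T k) :
    ∃ m, m < k ∧ T j ≤ T m ∧ (T m).1 + (T m).2 < (T k).1 + (T k).2 := by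
  obtain ⟨h1, h2⟩ := Prod.le_def.1 h.le
  have hk : ((T k).1, (T k).2) ∈ μ := hT.mem k
  by_cases hcol : (T j).2 < (T k).2
  · obtain ⟨m, hm⟩ := hT.exists_eq (μ.up_left_mem le_rfl (Nat.sub_le _ 1) hk)
    refine ⟨m, hT.2.2 m k (Or.inl ⟨by rw [hm], by rw [hm]; omega⟩), ?_, by rw [hm]; omega⟩
    rw [hm, Prod.le_def]; omega
  · have hrow : (T j).1 < (T k).1 := by
      by_contra! hrow
      exact h.not_ge (Prod.le_def.2 ⟨hrow, by omega⟩)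
    obtain ⟨m, hm⟩ := hT.exists_eq (μ.up_left_mem (Nat.sub_le _ 1) le_rfl hk)
    refine ⟨m, hT.2.2 m k (Or.inr ⟨by rw [hm]; omega, by rw [hm]⟩), ?_, by rw [hm]; omega⟩
    rw [hm, Prod.le_def]; omega

lemma lt_of_lt (hT : IsStandardTableau μ n T) {j k : Fin n} (h : T j < T k) : j < k := by
  induction hd : (T k).1 + (T k).2 using Nat.strong_induction_on generalizing k with
  | _ d ih =>
    obtain ⟨m, hmk, hjm, hm⟩ := hT.exists_pred_of_lt h
    rcases hjm.eq_or_lt with hjm | hjm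
    · rwa [hT.1 hjm]
    · exact (ih _ (hd ▸ hm) hjm rfl).trans hmk

lemma of_lt_imp_lt (hinj : Function.Injective T) (hrange : Set.range T = μ.cells)
    (hlt : ∀ j k, T j < T k → j < k) : IsStandardTableau μ n T := by
  refine ⟨hinj, hrange, fun j k hjk => hlt j k ?_⟩
  rcases hjk with ⟨h1, h2⟩ | ⟨h1, h2⟩ <;>
    exact Prod.lt_iff.2 (by omega)

lemma of_strictMono (hrange : Set.range T = μ.cells) (hT : StrictMono (toLex ∘ T)) :
    IsStandardTableau μ n T :=
  of_lt_imp_lt hT.injective.of_comp hrange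
    fun _ _ h => hT.lt_iff_lt.1 (Prod.Lex.toLex_strictMono h)

variable (hT : IsStandardTableau μ n T) {a b : Fin n} (hab : (b : ℕ) = a + 1)
  (hba : toLex (T b) < toLex (T a))
include hT hab hba

lemma lt_and_lt_of_inversion : (T b).1 < (T a).1 ∧ (T a).2 < (T b).2 := by
  have hne : T b ≠ T a := fun h => by simpa [hab] using congrArg Fin.val (hT.1 h)
  have hcol : (T a).2 < (T b).2 := by
    by_contra! hcol
    have hrow := (Prod.Lex.toLex_lt_toLex.1 hba).elim le_of_lt (fun h => h.1.le)
    exact (hT.lt_of_lt (lt_of_le_of_ne (Prod.le_def.2 ⟨hrow, hcol⟩) hne)).not_ge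
      (Fin.le_def.2 (by omega))
  refine ⟨(Prod.Lex.toLex_lt_toLex.1 hba).resolve_right fun h => ?_, hcol⟩
  omega

lemma one_lt_abs_boxContent_sub : 1 < |boxContent (T a) - boxContent (T b)| := by
  obtain ⟨h1, h2⟩ := hT.lt_and_lt_of_inversion hab hba
  rw [abs_sub_comm, boxContent, boxContent]
  exact lt_abs.2 (Or.inl (by omega))

lemma comp_swap : IsStandardTableau μ n (T ∘ swap a b) := by
  obtain ⟨h1, h2⟩ := hT.lt_and_lt_of_inversion hab hba
  refine of_lt_imp_lt (hT.1.comp (swap a b).injective) (by rw [EquivLike.range_comp, hT.2.1])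
    fun j k hjk => ?_
  rcases lt_or_eq_of_swap_lt_swap hab (hT.lt_of_lt hjk) with h | ⟨rfl, rfl⟩
  · exact h
  · simp only [Function.comp_apply, swap_apply_left, swap_apply_right] at hjk
    exact absurd (Prod.le_def.1 hjk.le).1 (by omega)

end IsStandardTableau

lemma Fin.last_eq_comp_prod_ofFn {β : Type*} {n ℓ : ℕ} (Ts : Fin (ℓ + 1) → Fin n → β)
    (σs : Fin ℓ → Perm (Fin n)) (h : ∀ i, Ts i.succ = Ts i.castSucc ∘ σs i) :
    Ts (Fin.last ℓ) = Ts 0 ∘ (List.ofFn σs).prod := by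
  induction ℓ with
  | zero => simp
  | succ ℓ ih =>
    rw [← Fin.succ_last, ih (fun i => Ts i.succ) (fun i => σs i.succ) fun i => h i.succ,
      h 0, List.ofFn_succ, List.prod_cons, Perm.coe_mul]
    rfl

section AdmissibleChain

variable {n : ℕ}

def IsAdmissibleChain (μ : YoungDiagram) (T : Fin n → ℕ × ℕ) {ℓ : ℕ}
    (ks : Fin ℓ → Fin n × Fin n) (Ts : Fin (ℓ + 1) → Fin n → ℕ × ℕ) : Prop :=
  (∀ i : Fin ℓ, ((ks i).2 : ℕ) = ((ks i).1 : ℕ) + 1) ∧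
  Ts 0 = T ∧
  ∀ i : Fin ℓ,
    IsStandardTableau μ n (Ts i.castSucc) ∧
    1 < |boxContent (Ts i.castSucc ((ks i).1)) - boxContent (Ts i.castSucc ((ks i).2))| ∧
    Ts i.succ = Ts i.castSucc ∘ (swap ((ks i).1) ((ks i).2))

variable {μ : YoungDiagram}

lemma isAdmissibleChain_nil (T : Fin n → ℕ × ℕ) :
    IsAdmissibleChain μ T (Fin.elim0 : Fin 0 → Fin n × Fin n) fun _ => T :=
  ⟨fun i => i.elim0, rfl, fun i => i.elim0⟩

lemma IsAdmissibleChain.cons {T : Fin n → ℕ × ℕ} {a b : Fin n} {ℓ : ℕ}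
    {ks : Fin ℓ → Fin n × Fin n} {Ts : Fin (ℓ + 1) → Fin n → ℕ × ℕ}
    (hT : IsStandardTableau μ n T) (hab : (b : ℕ) = a + 1)
    (hadm : 1 < |boxContent (T a) - boxContent (T b)|)
    (h : IsAdmissibleChain μ (T ∘ swap a b) ks Ts) :
    IsAdmissibleChain μ T (Fin.cons (a, b) ks) (Fin.cons T Ts) := by
  obtain ⟨hadj, h0, hsteps⟩ := h
  refine ⟨Fin.cases hab hadj, rfl, Fin.cases ⟨hT, hadm, h0⟩ fun i => ?_⟩
  simpa only [← Fin.succ_castSucc, Fin.cons_succ] using hsteps i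

theorem IsStandardTableau.exists_admissibleChain_strictMono {T : Fin n → ℕ × ℕ}
    (hT : IsStandardTableau μ n T) :
    ∃ (ℓ : ℕ) (ks : Fin ℓ → Fin n × Fin n) (Ts : Fin (ℓ + 1) → Fin n → ℕ × ℕ),
      IsAdmissibleChain μ T ks Ts ∧ ℓ = #(inversions (toLex ∘ T)) ∧
      StrictMono (toLex ∘ Ts (Fin.last ℓ)) := by
  induction hN : #(inversions (toLex ∘ T)) generalizing T with
  | zero =>
    refine ⟨0, Fin.elim0, fun _ => T, isAdmissibleChain_nil T, rfl, ?_⟩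
    exact (inversions_eq_empty_iff_monotone.1 (card_eq_zero.1 hN)).strictMono_of_injective
      (toLex.injective.comp hT.1)
  | succ N ih =>
    have hnotMono : ¬Monotone (toLex ∘ T) := fun h => by
      simp [inversions_eq_empty_iff_monotone.2 h] at hN
    obtain ⟨a, b, hab, hba⟩ := exists_adjacent_inversion hnotMono
    have hcard : #(inversions (toLex ∘ T ∘ swap a b)) + 1 = N + 1 :=
      hN ▸ card_inversions_comp_swap hab hba
    obtain ⟨ℓ, ks, Ts, hchain, hℓ, hsorted⟩ := ih (hT.comp_swap hab hba) (by omega)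
    refine ⟨ℓ + 1, Fin.cons (a, b) ks, Fin.cons T Ts,
      hchain.cons hT hab (hT.one_lt_abs_boxContent_sub hab hba), by omega, ?_⟩
    rwa [← Fin.succ_last, Fin.cons_succ]

end AdmissibleChain

theorem standard_tableau_to_canonical_general (n : ℕ) (μ : YoungDiagram)
    (T : Fin n → ℕ × ℕ) (hT : IsStandardTableau μ n T) :
    ∃ (ℓ : ℕ) (ks : Fin ℓ → Fin n × Fin n) (Ts : Fin (ℓ + 1) → (Fin n → ℕ × ℕ)),
      (∀ i : Fin ℓ, ((ks i).2 : ℕ) = ((ks i).1 : ℕ) + 1) ∧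
      Ts 0 = T ∧
      (∀ i : Fin ℓ,
        IsStandardTableau μ n (Ts i.castSucc) ∧
        1 < |boxContent (Ts i.castSucc ((ks i).1)) -
              boxContent (Ts i.castSucc ((ks i).2))| ∧
        Ts i.succ = Ts i.castSucc ∘ (Equiv.swap ((ks i).1) ((ks i).2))) ∧
      IsStandardTableau μ n (Ts (Fin.last ℓ)) ∧
      (∀ j k : Fin n, j < k →
        ((Ts (Fin.last ℓ) j).1 < (Ts (Fin.last ℓ) k).1 ∨
         ((Ts (Fin.last ℓ) j).1 = (Ts (Fin.last ℓ) k).1 ∧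
          (Ts (Fin.last ℓ) j).2 < (Ts (Fin.last ℓ) k).2))) ∧
      ℓ = coxeterLength n
        ((List.ofFn (fun i : Fin ℓ => Equiv.swap ((ks i).1) ((ks i).2))).prod) := by
  obtain ⟨ℓ, ks, Ts, ⟨hadj, h0, hsteps⟩, hℓ, hsorted⟩ := hT.exists_admissibleChain_strictMono
  set w := (List.ofFn fun i : Fin ℓ => swap (ks i).1 (ks i).2).prod
  have hlast : Ts (Fin.last ℓ) = T ∘ w :=
    h0 ▸ Fin.last_eq_comp_prod_ofFn Ts _ fun i => (hsteps i).2.2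
  have hswaps : ∀ x ∈ List.ofFn fun i : Fin ℓ => swap (ks i).1 (ks i).2, IsAdjacentSwap x := by
    simp only [List.mem_ofFn]
    rintro _ ⟨i, rfl⟩
    exact ⟨_, _, hadj i, rfl⟩
  -- The final tableau is sorted, so the inversions of `T = Ts last ∘ w⁻¹` are those of `w⁻¹`.
  have hinv : #(inversions ⇑w⁻¹) = ℓ := by
    rw [hℓ, ← inversions_strictMono_comp hsorted, hlast, Function.comp_assoc,
      Function.comp_assoc, ← Perm.coe_mul, mul_inv_cancel, Perm.coe_one, Function.comp_id]
  refine ⟨ℓ, ks, Ts, hadj, h0, hsteps, ?_, fun j k hjk => Prod.Lex.toLex_lt_toLex.1 (hsorted hjk),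
    ?_⟩
  · exact .of_strictMono (by rw [hlast, EquivLike.range_comp, hT.2.1]) hsorted
  · rw [coxeterLength_prod_eq_length _ hswaps (by rw [List.length_ofFn, hinv]), List.length_ofFn]

/-- Every standard `λ`-tableau `T` can be transformed into the canonical (row-reading)
tableau `T(λ)` by a sequence of admissible transpositions — each step swaps two
consecutive entries whose boxes have contents differing by more than `1`, and yields a
standard tableau — and the number `ℓ` of steps can be chosen to equal the Coxeter length
of the product of the corresponding simple transpositions in `Sₙ`.

Here `Ts i` is the tableau after `i` steps, step `i` swaps the (0-indexed) entries
`(ks i).1` and `(ks i).2 = (ks i).1 + 1`, and the final tableau is canonical: its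
entries are increasing for the lexicographic (row-major) order on boxes, which
characterizes `T(λ)`. -/
theorem standard_tableau_to_canonical (n : ℕ) (μ : YoungDiagram) (hμ : μ.card = n)
    (T : Fin n → ℕ × ℕ) (hT : IsStandardTableau μ n T) :
    ∃ (ℓ : ℕ) (ks : Fin ℓ → Fin n × Fin n) (Ts : Fin (ℓ + 1) → (Fin n → ℕ × ℕ)),
      (∀ i : Fin ℓ, ((ks i).2 : ℕ) = ((ks i).1 : ℕ) + 1) ∧
      Ts 0 = T ∧
      (∀ i : Fin ℓ,
        IsStandardTableau μ n (Ts i.castSucc) ∧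
        1 < |boxContent (Ts i.castSucc ((ks i).1)) -
              boxContent (Ts i.castSucc ((ks i).2))| ∧
        Ts i.succ = Ts i.castSucc ∘ (Equiv.swap ((ks i).1) ((ks i).2))) ∧
      IsStandardTableau μ n (Ts (Fin.last ℓ)) ∧
      (∀ j k : Fin n, j < k →
        ((Ts (Fin.last ℓ) j).1 < (Ts (Fin.last ℓ) k).1 ∨
         ((Ts (Fin.last ℓ) j).1 = (Ts (Fin.last ℓ) k).1 ∧
          (Ts (Fin.last ℓ) j).2 < (Ts (Fin.last ℓ) k).2))) ∧
      ℓ = coxeterLength n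
        ((List.ofFn (fun i : Fin ℓ => Equiv.swap ((ks i).1) ((ks i).2))).prod) :=
  standard_tableau_to_canonical_general n μ T hT
end

section
/- Let λ be a partition of k and let χ^λ denote the character of the representation V^λ of S_k given by Young's orthogonal form. Then the value of χ^λ at the k-cycle (1 2 … k) equals (−1)^b if λ is the hook (k−b, 1, 1, …, 1) with b ones (for some 0 ≤ b ≤ k−1), and equals 0 if λ is not a hook. -/
/-- The complex vector space `V^μ` with basis indexed by the standard `μ`-tableaux. -/
abbrev YoungSpace (μ : YoungDiagram) (n : ℕ) : Type :=
  {T : Fin n → ℕ × ℕ // IsStandardTableau μ n T} → ℂ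

/-- The coefficient `ρ = 1/(cont T_{q} − cont T_{p})` featuring in Young's orthogonal
form, where `cont (r, s) = s − r` (here `p`, `q` are 0-indexed entry positions). -/
noncomputable def rhoCoef {n : ℕ} (p q : Fin n) (T : Fin n → ℕ × ℕ) : ℝ :=
  ((((T q).2 : ℝ) - ((T q).1 : ℝ)) - (((T p).2 : ℝ) - ((T p).1 : ℝ)))⁻¹

open scoped Classical in
/-- The operator of Young's orthogonal form attached to the simple transposition
swapping the (0-indexed) entries `p` and `q = p + 1`:  on the basis vector `w_T` it acts
by `w_T ↦ ρ w_T + √(1 − ρ²) w_{s T}` where `ρ = 1/(cont T_{q} − cont T_{p})` and `s T`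
is `T` with the entries `p, q` swapped (the second term being omitted when `s T` is not
standard, in which case `√(1 − ρ²) = 0`). -/
noncomputable def youngOp (μ : YoungDiagram) (n : ℕ) (p q : Fin n) :
    Module.End ℂ (YoungSpace μ n) where
  toFun f := fun S =>
    (rhoCoef p q S.val : ℂ) * f S +
      ((Real.sqrt (1 - (rhoCoef p q S.val) ^ 2) : ℝ) : ℂ) *
        (if h : IsStandardTableau μ n (S.val ∘ Equiv.swap p q) then
          f ⟨S.val ∘ Equiv.swap p q, h⟩ else 0)
  map_add' f g := by
    funext S
    by_cases h : IsStandardTableau μ n (S.val ∘ Equiv.swap p q) <;>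
      simp [h] <;> ring
  map_smul' c f := by
    funext S
    by_cases h : IsStandardTableau μ n (S.val ∘ Equiv.swap p q) <;>
      simp [h] <;> ring

/-- A representation of `Sₙ` on `V^μ` is "the" Young orthogonal form representation if
every adjacent transposition `(p, p+1)` acts by the orthogonal-form operator. -/
def IsYoungOrthogonalRep (μ : YoungDiagram) (n : ℕ)
    (ρ : Representation ℂ (Equiv.Perm (Fin n)) (YoungSpace μ n)) : Prop :=
  ∀ p q : Fin n, (q : ℕ) = (p : ℕ) + 1 → ρ (Equiv.swap p q) = youngOp μ n p q

/-
Writing the `k`-cycle as `s₁ s₂ ⋯ s_{k-1}`, the partial products `s₁ ⋯ s_j` only move the entries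
`1, …, j + 1`. Hence in the product of the orthogonal-form operators only the diagonal part
`ρ w_T` of each factor contributes to the diagonal, and the character value is
`Σ_T ∏_i 1 / (c(T_{i+1}) - c(T_i))` over standard tableaux `T`, `c` being the content.

Removing the cell of the largest entry turns this sum into a recursion over the corners of the
diagram, which is closed by the refined sums `R(F, z) = Σ_T wt(T) / (z - c(T_last))`. For the hook
with arm `a` and leg `b`, `R = (-1)^b z / ((z - a)(z + b))`, and summing the corner terms gives
`(-1)^b`. If the diagram contains the cell `(1, 1)`, every corner term vanishes: either the smaller
diagram still contains `(1, 1)`, or the removed corner is `(1, 1)` itself, of content `0`, where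
the hook formula vanishes.
-/

open Finset

/-- `IsStandardTableau` for an arbitrary finite set of cells, so that cells can be removed one at
a time. -/
def IsStandardFilling (F : Finset (ℕ × ℕ)) (n : ℕ) (T : Fin n → ℕ × ℕ) : Prop :=
  Function.Injective T ∧ Set.range T = (F : Set (ℕ × ℕ)) ∧
    ∀ j k : Fin n,
      (((T k).1 = (T j).1 ∧ (T k).2 = (T j).2 + 1) ∨
       ((T k).1 = (T j).1 + 1 ∧ (T k).2 = (T j).2)) → j < k

def corners (F : Finset (ℕ × ℕ)) : Finset (ℕ × ℕ) :=
  F.filter fun x => (x.1 + 1, x.2) ∉ F ∧ (x.1, x.2 + 1) ∉ F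

theorem mem_corners {F : Finset (ℕ × ℕ)} {x : ℕ × ℕ} :
    x ∈ corners F ↔ x ∈ F ∧ (x.1 + 1, x.2) ∉ F ∧ (x.1, x.2 + 1) ∉ F :=
  mem_filter

namespace IsStandardFilling

variable {F : Finset (ℕ × ℕ)} {n : ℕ}

theorem mem {T : Fin n → ℕ × ℕ} (hT : IsStandardFilling F n T) (i : Fin n) : T i ∈ F :=
  mem_coe.1 (hT.2.1 ▸ Set.mem_range_self i)

theorem exists_eq {T : Fin n → ℕ × ℕ} (hT : IsStandardFilling F n T) {x : ℕ × ℕ} (hx : x ∈ F) :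
    ∃ i, T i = x := by
  rwa [← mem_coe, ← hT.2.1] at hx

theorem last_mem_corners {T : Fin (n + 1) → ℕ × ℕ} (hT : IsStandardFilling F (n + 1) T) :
    T (Fin.last n) ∈ corners F := by
  refine mem_corners.2 ⟨hT.mem _, fun h => ?_, fun h => ?_⟩ <;>
  · obtain ⟨j, hj⟩ := hT.exists_eq h
    exact (Fin.le_last j).not_gt (hT.2.2 _ _ (by simp [hj]))

theorem init {T : Fin (n + 1) → ℕ × ℕ} (hT : IsStandardFilling F (n + 1) T) :
    IsStandardFilling (F.erase (T (Fin.last n))) n (Fin.init T) := by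
  obtain ⟨hinj, hran, hord⟩ := hT
  refine ⟨hinj.comp (Fin.castSucc_injective n), ?_, fun j k h => ?_⟩
  · ext x
    simp only [Set.mem_range, coe_erase, Set.mem_sdiff, Set.mem_singleton_iff, ← hran,
      Fin.init]
    constructor
    · rintro ⟨i, rfl⟩
      exact ⟨⟨_, rfl⟩, fun h => (Fin.castSucc_lt_last i).ne (hinj h)⟩
    · rintro ⟨⟨i, rfl⟩, hne⟩
      obtain ⟨i, rfl⟩ := Fin.eq_castSucc_of_ne_last (fun h => hne (congrArg T h))
      exact ⟨i, rfl⟩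
  · exact Fin.castSucc_lt_castSucc_iff.1 (hord _ _ h)

theorem snoc {T : Fin n → ℕ × ℕ} {x : ℕ × ℕ} (hT : IsStandardFilling (F.erase x) n T)
    (hx : x ∈ corners F) :
    IsStandardFilling F (n + 1) (Fin.snoc T x) := by
  obtain ⟨hxF, hx1, hx2⟩ := mem_corners.1 hx
  have hTF : ∀ i, T i ∈ F := fun i => mem_of_mem_erase (hT.mem i)
  have hTx : ∀ i, T i ≠ x := fun i => ne_of_mem_erase (hT.mem i)
  refine ⟨?_, ?_, fun j k h => ?_⟩
  · intro i j h
    induction i using Fin.lastCases <;> induction j using Fin.lastCases <;>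
      simp_all [hT.1.eq_iff, (hTx _).symm]
  · ext y
    simp only [Set.mem_range, mem_coe]
    constructor
    · rintro ⟨i, rfl⟩
      induction i using Fin.lastCases <;> simp [hxF, hTF]
    · intro hy
      by_cases hyx : y = x
      · exact ⟨Fin.last n, by simp [hyx]⟩
      · obtain ⟨i, rfl⟩ := hT.exists_eq (mem_erase.2 ⟨hyx, hy⟩)
        exact ⟨i.castSucc, by simp⟩
  · induction k using Fin.lastCases with
    | last =>
      induction j using Fin.lastCases with
      | last => simp at h
      | cast j => exact Fin.castSucc_lt_last j
    | cast k =>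
      induction j using Fin.lastCases with
      | last =>
        simp only [Fin.snoc_castSucc, Fin.snoc_last] at h
        rcases h with ⟨h1, h2⟩ | ⟨h1, h2⟩
        · exact absurd (hTF k) (by rwa [← h1, ← h2] at hx2)
        · exact absurd (hTF k) (by rwa [← h1, ← h2] at hx1)
      | cast j =>
        simp only [Fin.snoc_castSucc] at h
        exact Fin.castSucc_lt_castSucc_iff.2 (hT.2.2 j k h)

end IsStandardFilling

instance (F : Finset (ℕ × ℕ)) (n : ℕ) : Finite {T : Fin n → ℕ × ℕ // IsStandardFilling F n T} :=
  ((Set.Finite.pi' fun _ => F.finite_toSet).subset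
    fun T (hT : IsStandardFilling F n T) i => hT.mem i).to_subtype

noncomputable instance (F : Finset (ℕ × ℕ)) (n : ℕ) :
    Fintype {T : Fin n → ℕ × ℕ // IsStandardFilling F n T} :=
  Fintype.ofFinite _

noncomputable instance (μ : YoungDiagram) (n : ℕ) :
    Fintype {T : Fin n → ℕ × ℕ // IsStandardTableau μ n T} :=
  inferInstanceAs (Fintype {T : Fin n → ℕ × ℕ // IsStandardFilling μ.cells n T})

theorem sum_isStandardFilling_succ {M : Type*} [AddCommMonoid M] (F : Finset (ℕ × ℕ)) (n : ℕ)
    (g : (Fin (n + 1) → ℕ × ℕ) → M) :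
    ∑ T : {T // IsStandardFilling F (n + 1) T}, g T.1 =
      ∑ x ∈ corners F, ∑ T : {T // IsStandardFilling (F.erase x) n T},
        g (Fin.snoc T.1 x) := by
  rw [← sum_fiberwise_of_maps_to (g := fun T => T.1 (Fin.last n)) (t := corners F)
    (fun T _ => T.2.last_mem_corners)]
  refine sum_congr rfl fun x hx => ?_
  refine sum_bij' (fun T hT => ⟨Fin.init T.1, (mem_filter.1 hT).2 ▸ T.2.init⟩)
    (fun T _ => ⟨Fin.snoc T.1 x, T.2.snoc hx⟩) (by simp) (by simp) ?_ (by simp) ?_ <;>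
  · intro T hT
    simp only [mem_filter, mem_univ, true_and] at hT
    simp [← hT]

def content (x : ℕ × ℕ) : ℝ := x.2 - x.1

theorem rhoCoef_eq {n : ℕ} (p q : Fin n) (T : Fin n → ℕ × ℕ) :
    rhoCoef p q T = (content (T q) - content (T p))⁻¹ :=
  rfl

noncomputable def tableauWeight {n : ℕ} (T : Fin (n + 1) → ℕ × ℕ) : ℝ :=
  ∏ i : Fin n, rhoCoef i.castSucc i.succ T

theorem tableauWeight_snoc {n : ℕ} (T : Fin (n + 1) → ℕ × ℕ) (x : ℕ × ℕ) :
    tableauWeight (Fin.snoc T x) =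
      tableauWeight T * (content x - content (T (Fin.last n)))⁻¹ := by
  rw [tableauWeight, tableauWeight, Fin.prod_univ_castSucc]
  simp only [rhoCoef_eq, Fin.succ_castSucc, Fin.succ_last, Fin.snoc_castSucc, Fin.snoc_last]

-- Both sums run over fillings of `n + 1` cells.
noncomputable def weightSum (n : ℕ) (F : Finset (ℕ × ℕ)) : ℝ :=
  ∑ T : {T // IsStandardFilling F (n + 1) T}, tableauWeight T.1

noncomputable def transitionSum (n : ℕ) (F : Finset (ℕ × ℕ)) (z : ℝ) : ℝ :=
  ∑ T : {T // IsStandardFilling F (n + 1) T},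
    tableauWeight T.1 * (z - content (T.1 (Fin.last n)))⁻¹

theorem weightSum_succ (n : ℕ) (F : Finset (ℕ × ℕ)) :
    weightSum (n + 1) F = ∑ x ∈ corners F, transitionSum n (F.erase x) (content x) := by
  simp only [weightSum, transitionSum, sum_isStandardFilling_succ, tableauWeight_snoc]

theorem transitionSum_succ (n : ℕ) (F : Finset (ℕ × ℕ)) (z : ℝ) :
    transitionSum (n + 1) F z =
      ∑ x ∈ corners F, (z - content x)⁻¹ * transitionSum n (F.erase x) (content x) := by
  rw [transitionSum, sum_isStandardFilling_succ F (n + 1)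
    fun T => tableauWeight T * (z - content (T (Fin.last (n + 1))))⁻¹]
  simp only [transitionSum, tableauWeight_snoc, Fin.snoc_last, mul_sum]
  exact sum_congr rfl fun _ _ => sum_congr rfl fun _ _ => by ring

/-- The hook `(a + 1, 1, …, 1)` with `b` rows below its first row. -/
def hook (a b : ℕ) : Finset (ℕ × ℕ) :=
  (range (a + 1)).image (fun j => (0, j)) ∪ (Ioc 0 b).image (fun i => (i, 0))

theorem mem_hook {a b : ℕ} {y : ℕ × ℕ} :
    y ∈ hook a b ↔ (y.1 = 0 ∧ y.2 ≤ a) ∨ (y.2 = 0 ∧ y.1 ≤ b) := by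
  obtain ⟨i, j⟩ := y
  simp only [hook, mem_union, mem_image, mem_range, mem_Ioc, Prod.mk.injEq]
  constructor
  · rintro (⟨j, hj, rfl, rfl⟩ | ⟨i, hi, rfl, rfl⟩) <;> omega
  · rintro (⟨rfl, hj⟩ | ⟨rfl, hi⟩)
    · exact .inl ⟨j, by omega, rfl, rfl⟩
    · rcases i.eq_zero_or_pos with rfl | hi0
      · exact .inl ⟨0, by omega, rfl, rfl⟩
      · exact .inr ⟨i, ⟨hi0, hi⟩, rfl, rfl⟩

theorem hook_zero_zero : hook 0 0 = {(0, 0)} := by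
  ext ⟨i, j⟩
  simp only [mem_hook, mem_singleton, Prod.mk.injEq]
  omega

theorem card_hook (a b : ℕ) : (hook a b).card = a + b + 1 := by
  rw [hook, card_union_of_disjoint, card_image_of_injective, card_image_of_injective]
  · simp only [card_range, Nat.card_Ioc]
    omega
  · exact fun _ _ h => (Prod.mk.inj h).1
  · exact fun _ _ h => (Prod.mk.inj h).2
  · simp only [disjoint_left, mem_image, mem_range, mem_Ioc]
    rintro _ ⟨j, -, rfl⟩ ⟨i, hi, h⟩
    simp only [Prod.mk.injEq] at h
    omega

theorem isLowerSet_hook (a b : ℕ) : IsLowerSet (hook a b : Set (ℕ × ℕ)) := by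
  rintro ⟨i, j⟩ ⟨i', j'⟩ ⟨hi, hj⟩
  simp only [mem_coe, mem_hook]
  simp only at hi hj
  omega

theorem corners_hook_succ_succ (a b : ℕ) :
    corners (hook (a + 1) (b + 1)) = {(0, a + 1), (b + 1, 0)} := by
  ext ⟨i, j⟩
  simp only [mem_corners, mem_hook, mem_insert, mem_singleton, Prod.mk.injEq]
  omega

theorem corners_hook_zero_right (a : ℕ) : corners (hook a 0) = {(0, a)} := by
  ext ⟨i, j⟩
  simp only [mem_corners, mem_hook, mem_singleton, Prod.mk.injEq]
  omega

theorem corners_hook_zero_left (b : ℕ) : corners (hook 0 (b + 1)) = {(b + 1, 0)} := by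
  ext ⟨i, j⟩
  simp only [mem_corners, mem_hook, mem_singleton, Prod.mk.injEq]
  omega

theorem hook_erase_arm (a b : ℕ) : (hook (a + 1) b).erase (0, a + 1) = hook a b := by
  ext ⟨i, j⟩
  simp only [mem_erase, mem_hook, ne_eq, Prod.mk.injEq]
  omega

theorem hook_erase_leg (a b : ℕ) : (hook a (b + 1)).erase (b + 1, 0) = hook a b := by
  ext ⟨i, j⟩
  simp only [mem_erase, mem_hook, ne_eq, Prod.mk.injEq]
  omega

theorem eq_hook_of_one_one_notMem {F : Finset (ℕ × ℕ)} (hF : IsLowerSet (F : Set (ℕ × ℕ)))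
    (hne : F.Nonempty) (h11 : ((1, 1) : ℕ × ℕ) ∉ F) :
    ∃ a b, F = hook a b := by
  obtain ⟨⟨i₀, a⟩, ha, hmax_a⟩ := exists_max_image F Prod.snd hne
  obtain ⟨⟨b, j₀⟩, hb, hmax_b⟩ := exists_max_image F Prod.fst hne
  refine ⟨a, b, ext fun ⟨i, j⟩ => ⟨fun h => mem_hook.2 ?_, fun h => ?_⟩⟩
  · have hj : j ≤ a := hmax_a _ h
    have hi : i ≤ b := hmax_b _ h
    have : i = 0 ∨ j = 0 := by
      by_contra! hij
      exact h11 (hF (show ((1, 1) : ℕ × ℕ) ≤ (i, j) from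
        ⟨Nat.one_le_iff_ne_zero.2 hij.1, Nat.one_le_iff_ne_zero.2 hij.2⟩) h)
    omega
  · rcases mem_hook.1 h with ⟨rfl, hj⟩ | ⟨rfl, hi⟩
    · exact hF (show (0, j) ≤ (i₀, a) from ⟨Nat.zero_le _, hj⟩) ha
    · exact hF (show (i, 0) ≤ (b, j₀) from ⟨hi, Nat.zero_le _⟩) hb

-- Stated for `Fin (0 + 1)`, the form in which it occurs in `transitionSum 0`.
instance (x : ℕ × ℕ) : Unique {T // IsStandardFilling {x} (0 + 1) T} where
  default := ⟨fun _ => x, fun i j _ => Fin.ext (by omega), by simp [Set.range_const], by simp⟩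
  uniq T := Subtype.ext <| funext fun i => mem_singleton.1 (T.2.mem i)

theorem transitionSum_zero_singleton (x : ℕ × ℕ) (z : ℝ) :
    transitionSum 0 {x} z = (z - content x)⁻¹ := by
  rw [transitionSum, Fintype.sum_unique]
  simp only [tableauWeight, univ_eq_empty, prod_empty, one_mul]
  rfl

theorem weightSum_zero_singleton (x : ℕ × ℕ) : weightSum 0 {x} = 1 := by
  rw [weightSum, Fintype.sum_unique]
  simp only [tableauWeight, univ_eq_empty, prod_empty]

theorem content_zero_left (a : ℕ) : content (0, a) = a := by simp [content]

theorem content_zero_right (b : ℕ) : content (b, 0) = -b := by simp [content]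

noncomputable def hookResolvent (a b : ℕ) (z : ℝ) : ℝ :=
  (-1) ^ b * z / ((z - a) * (z + b))

theorem hookResolvent_arm (a b : ℕ) :
    hookResolvent a b (a + 1) = (-1) ^ b * (a + 1) / (a + b + 1) := by
  rw [hookResolvent, add_sub_cancel_left, one_mul, add_right_comm]

theorem hookResolvent_leg (a b : ℕ) :
    hookResolvent a b (-(b + 1)) = (-1) ^ (b + 1) * (b + 1) / (a + b + 1) := by
  rw [hookResolvent, show -((b : ℝ) + 1) - a = -(a + b + 1) by ring,
    show -((b : ℝ) + 1) + b = -1 by ring]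
  ring

theorem transitionSum_hook {n a b : ℕ} (hab : a + b = n) {z : ℝ} (ha : z ≠ a) (hb : z ≠ -b) :
    transitionSum n (hook a b) z = hookResolvent a b z := by
  induction n generalizing a b z with
  | zero =>
    obtain ⟨rfl, rfl⟩ : a = 0 ∧ b = 0 := by omega
    simp only [CharP.cast_eq_zero, ne_eq] at ha
    rw [hook_zero_zero, transitionSum_zero_singleton, hookResolvent]
    field_simp
    simp [content]
  | succ n ih =>
    have arm {a b : ℕ} (h : a + b = n) :
        transitionSum n (hook a b) (a + 1) = (-1) ^ b * (a + 1) / (a + b + 1) := by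
      rw [ih h (by simp) (by linarith), hookResolvent_arm]
    have leg {a b : ℕ} (h : a + b = n) :
        transitionSum n (hook a b) (-(b + 1)) = (-1) ^ (b + 1) * (b + 1) / (a + b + 1) := by
      rw [ih h (by linarith) (by simp), hookResolvent_leg]
    rcases a with _ | a <;> rcases b with _ | b
    · omega
    · push_cast at hb
      rw [Nat.cast_zero] at ha
      have : z + (b + 1) ≠ 0 := fun h => hb (by linarith)
      rw [transitionSum_succ, corners_hook_zero_left, sum_singleton, hook_erase_leg, content_zero_right,
        Nat.cast_add_one, leg (by omega), hookResolvent]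
      push_cast
      field_simp
      ring
    · push_cast at ha
      rw [Nat.cast_zero, neg_zero] at hb
      have : z - (a + 1) ≠ 0 := sub_ne_zero.2 ha
      rw [transitionSum_succ, corners_hook_zero_right, sum_singleton, hook_erase_arm, content_zero_left,
        Nat.cast_add_one, arm (by omega), hookResolvent]
      push_cast
      simp only [pow_zero, one_mul, add_zero]
      field_simp
    · push_cast at ha hb
      have : z - (a + 1) ≠ 0 := sub_ne_zero.2 ha
      have : z + (b + 1) ≠ 0 := fun h => hb (by linarith)
      have : (a : ℝ) + b + 2 ≠ 0 := by positivity
      rw [transitionSum_succ, corners_hook_succ_succ, sum_pair (by simp), hook_erase_arm,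
        hook_erase_leg, content_zero_left, content_zero_right, Nat.cast_add_one, Nat.cast_add_one,
        arm (by omega), leg (by omega), hookResolvent]
      push_cast
      field_simp
      ring

theorem weightSum_hook {n a b : ℕ} (hab : a + b = n) : weightSum n (hook a b) = (-1) ^ b := by
  rcases n with _ | n
  · obtain ⟨rfl, rfl⟩ : a = 0 ∧ b = 0 := by omega
    rw [hook_zero_zero, weightSum_zero_singleton, pow_zero]
  have arm {a b : ℕ} (h : a + b = n) :
      transitionSum n (hook a b) (a + 1) = (-1) ^ b * (a + 1) / (a + b + 1) := by
    rw [transitionSum_hook h (by simp) (by linarith), hookResolvent_arm]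
  have leg {a b : ℕ} (h : a + b = n) :
      transitionSum n (hook a b) (-(b + 1)) = (-1) ^ (b + 1) * (b + 1) / (a + b + 1) := by
    rw [transitionSum_hook h (by linarith) (by simp), hookResolvent_leg]
  rcases a with _ | a <;> rcases b with _ | b
  · omega
  · rw [weightSum_succ, corners_hook_zero_left, sum_singleton, hook_erase_leg, content_zero_right,
      Nat.cast_add_one, leg (by omega)]
    push_cast
    field_simp
    ring
  · rw [weightSum_succ, corners_hook_zero_right, sum_singleton, hook_erase_arm, content_zero_left,
      Nat.cast_add_one, arm (by omega)]
    push_cast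
    field_simp
    ring
  · rw [weightSum_succ, corners_hook_succ_succ, sum_pair (by simp), hook_erase_arm,
      hook_erase_leg, content_zero_left, content_zero_right, Nat.cast_add_one, Nat.cast_add_one,
      arm (by omega), leg (by omega)]
    push_cast
    field_simp
    ring

theorem isLowerSet_erase_of_mem_corners {F : Finset (ℕ × ℕ)} (hF : IsLowerSet (F : Set (ℕ × ℕ)))
    {x : ℕ × ℕ} (hx : x ∈ corners F) : IsLowerSet (F.erase x : Set (ℕ × ℕ)) := by
  obtain ⟨-, hx₁, hx₂⟩ := mem_corners.1 hx
  intro y w hwy hy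
  rw [mem_coe, mem_erase] at hy ⊢
  obtain ⟨hyx, hyF⟩ := hy
  refine ⟨fun hwx => ?_, hF hwy hyF⟩
  subst hwx
  obtain ⟨i, j⟩ := w
  obtain ⟨i', j'⟩ := y
  obtain ⟨hi : i ≤ i', hj : j ≤ j'⟩ := hwy
  rcases hi.lt_or_eq with hi | rfl
  · exact hx₁ (hF (show (i + 1, j) ≤ (i', j') from ⟨hi, hj⟩) hyF)
  · have hj : j < j' := hj.lt_of_ne fun h => hyx (by rw [h])
    exact hx₂ (hF (show (i, j + 1) ≤ (i, j') from ⟨le_rfl, hj⟩) hyF)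

theorem three_le_card_of_one_one_mem {F : Finset (ℕ × ℕ)} (hF : IsLowerSet (F : Set (ℕ × ℕ)))
    (h11 : ((1, 1) : ℕ × ℕ) ∈ F) : 3 ≤ F.card := by
  have hsub : {(0, 0), (0, 1), (1, 1)} ⊆ F := by
    simp only [insert_subset_iff, singleton_subset_iff]
    exact ⟨hF (by decide) h11, hF (by decide) h11, h11⟩
  exact card_le_card hsub

theorem transitionSum_erase_corner_eq_zero {m : ℕ} {F : Finset (ℕ × ℕ)}
    (hF : IsLowerSet (F : Set (ℕ × ℕ))) (hcard : F.card = m + 2) (h11 : ((1, 1) : ℕ × ℕ) ∈ F)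
    {x : ℕ × ℕ} (hx : x ∈ corners F) : transitionSum m (F.erase x) (content x) = 0 := by
  induction m generalizing F x with
  | zero => exact absurd (three_le_card_of_one_one_mem hF h11) (by omega)
  | succ m ih =>
    have hF' := isLowerSet_erase_of_mem_corners hF hx
    have hcard' : (F.erase x).card = m + 2 := by
      rw [card_erase_of_mem (mem_corners.1 hx).1, hcard]
      rfl
    by_cases h11' : ((1, 1) : ℕ × ℕ) ∈ F.erase x
    · rw [transitionSum_succ]
      exact sum_eq_zero fun y hy => by rw [ih hF' hcard' h11' hy, mul_zero]
    obtain rfl : x = (1, 1) := by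
      by_contra hne
      exact h11' (mem_erase.2 ⟨Ne.symm hne, h11⟩)
    obtain ⟨a, b, hab⟩ := eq_hook_of_one_one_notMem hF'
      ⟨(0, 0), mem_erase.2 ⟨by simp, hF (by decide) h11⟩⟩ h11'
    have h01 : ((0, 1) : ℕ × ℕ) ∈ hook a b := hab ▸ mem_erase.2 ⟨by simp, hF (by decide) h11⟩
    have h10 : ((1, 0) : ℕ × ℕ) ∈ hook a b := hab ▸ mem_erase.2 ⟨by simp, hF (by decide) h11⟩
    simp only [mem_hook, true_and, one_ne_zero, false_and, or_false, false_or] at h01 h10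
    have hn : a + b = m + 1 := by
      have := card_hook a b
      rw [← hab] at this
      omega
    rw [hab, transitionSum_hook hn (by simp [content, eq_comm]; omega)
      (by simp [content]; omega)]
    simp [hookResolvent, content]

theorem weightSum_eq_zero_of_one_one_mem {n : ℕ} {F : Finset (ℕ × ℕ)}
    (hF : IsLowerSet (F : Set (ℕ × ℕ))) (hcard : F.card = n + 1)
    (h11 : ((1, 1) : ℕ × ℕ) ∈ F) : weightSum n F = 0 := by
  rcases n with _ | n
  · exact absurd (three_le_card_of_one_one_mem hF h11) (by omega)
  rw [weightSum_succ]
  exact sum_eq_zero fun x hx => transitionSum_erase_corner_eq_zero hF hcard h11 hx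

open Equiv Fin

theorem cycleRange_succ_eq_mul_swap {m : ℕ} (i : Fin m) :
    cycleRange i.succ = cycleRange i.castSucc * swap i.castSucc i.succ := by
  ext x
  simp only [Perm.coe_mul, Function.comp_apply, swap_apply_def]
  split_ifs with h₁ h₂
  · subst h₁
    simp [cycleRange_of_lt castSucc_lt_succ, cycleRange_of_gt castSucc_lt_succ]
  · subst h₂
    simp
  · rcases lt_or_gt_of_ne h₂ with h | h
    · have : x < i.castSucc := (le_castSucc_iff.2 h).lt_of_ne h₁
      simp [cycleRange_of_lt h, cycleRange_of_lt this]
    · have : i.castSucc < x := castSucc_lt_succ.trans h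
      simp [cycleRange_of_gt h, cycleRange_of_gt this]

section YoungOrthogonalForm

variable {μ : YoungDiagram}

theorem youngOp_apply_eq_of_forall {n : ℕ} {p q : Fin n} {P : (Fin n → ℕ × ℕ) → Prop}
    (hP : ∀ S, P (S ∘ swap p q) ↔ P S) {f g : YoungSpace μ n}
    (hfg : ∀ S : {T // IsStandardTableau μ n T}, P S.1 → f S = g S)
    {S : {T // IsStandardTableau μ n T}} (hS : P S.1) :
    youngOp μ n p q f S = youngOp μ n p q g S := by
  simp only [youngOp, LinearMap.coe_mk, AddHom.coe_mk, hfg S hS]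
  split_ifs with h
  · rw [hfg _ ((hP _).2 hS)]
  · rfl

theorem youngOp_single_apply_of_comp_swap_ne {n : ℕ} {p q : Fin n}
    {S T : {T // IsStandardTableau μ n T}} (hST : S.1 ∘ swap p q ≠ T.1) :
    youngOp μ n p q (Pi.single T 1) S = rhoCoef p q T.1 * (Pi.single T 1 : YoungSpace μ n) S := by
  have : ∀ h, (Pi.single T 1 : YoungSpace μ n) ⟨S.1 ∘ swap p q, h⟩ = 0 := fun h =>
    Pi.single_eq_of_ne (fun e => hST (congrArg Subtype.val e)) _
  simp only [youngOp, LinearMap.coe_mk, AddHom.coe_mk, this, dite_eq_ite, ite_self, mul_zero,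
    add_zero]
  by_cases h : S = T
  · rw [h]
  · simp [h]

variable {m : ℕ} {ρ : Representation ℂ (Perm (Fin (m + 1))) (YoungSpace μ (m + 1))}

theorem IsYoungOrthogonalRep.map_cycleRange_succ (hρ : IsYoungOrthogonalRep μ (m + 1) ρ)
    (i : Fin m) :
    ρ (cycleRange i.succ) = ρ (cycleRange i.castSucc) * youngOp μ (m + 1) i.castSucc i.succ := by
  rw [cycleRange_succ_eq_mul_swap, map_mul, hρ _ _ rfl]

theorem IsYoungOrthogonalRep.map_cycleRange_apply_eq_of_forall
    (hρ : IsYoungOrthogonalRep μ (m + 1) ρ) (j : Fin (m + 1)) {P : (Fin (m + 1) → ℕ × ℕ) → Prop}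
    (hP : ∀ i : Fin m, i.succ ≤ j → ∀ S, P (S ∘ swap i.castSucc i.succ) ↔ P S)
    {f g : YoungSpace μ (m + 1)}
    (hfg : ∀ S : {T // IsStandardTableau μ (m + 1) T}, P S.1 → f S = g S)
    {S : {T // IsStandardTableau μ (m + 1) T}} (hS : P S.1) :
    ρ (cycleRange j) f S = ρ (cycleRange j) g S := by
  induction j using Fin.induction generalizing f g S with
  | zero => simpa using hfg S hS
  | succ i ih =>
    rw [hρ.map_cycleRange_succ, Module.End.mul_apply, Module.End.mul_apply]
    refine ih (fun i' hi' => hP i' (hi'.trans (castSucc_lt_succ).le)) (fun S' hS' => ?_) hS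
    exact youngOp_apply_eq_of_forall (hP i le_rfl) hfg hS'

end YoungOrthogonalForm

section Trace

variable {μ : YoungDiagram} {m : ℕ}
  {ρ : Representation ℂ (Perm (Fin (m + 1))) (YoungSpace μ (m + 1))}

theorem filter_succ_le_succ (i : Fin m) :
    univ.filter (fun i' : Fin m => i'.succ ≤ i.succ) =
      insert i (univ.filter fun i' : Fin m => i'.succ ≤ i.castSucc) := by
  ext i'
  simp only [mem_filter, mem_univ, true_and, mem_insert, Fin.le_def, Fin.val_succ,
    Fin.val_castSucc, Fin.ext_iff]
  omega

theorem IsYoungOrthogonalRep.map_cycleRange_single_apply_self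
    (hρ : IsYoungOrthogonalRep μ (m + 1) ρ) (j : Fin (m + 1))
    (T : {T // IsStandardTableau μ (m + 1) T}) :
    ρ (cycleRange j) (Pi.single T 1) T =
      ∏ i ∈ univ.filter (fun i : Fin m => i.succ ≤ j), (rhoCoef i.castSucc i.succ T.1 : ℂ) := by
  induction j using Fin.induction with
  | zero => simp [Fin.succ_ne_zero]
  | succ i ih =>
    set P : (Fin (m + 1) → ℕ × ℕ) → Prop := fun S => ∀ x, i.castSucc < x → S x = T.1 x
    have hP : ∀ i' : Fin m, i'.succ ≤ i.castSucc → ∀ S,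
        P (S ∘ swap i'.castSucc i'.succ) ↔ P S := by
      refine fun i' hi' S => forall_congr' fun x => imp_congr_right fun hx => ?_
      rw [Function.comp_apply, swap_apply_of_ne_of_ne]
      · exact ne_of_gt ((castSucc_lt_succ.trans_le hi').trans hx)
      · exact ne_of_gt (hi'.trans_lt hx)
    -- The off-diagonal part of `s_i w_T` is a multiple of `w_{s_i T}`, and `s_i T` differs from
    -- `T` at the entry `i + 1`, which the earlier factors do not move.
    have hY : ∀ S : {T // IsStandardTableau μ (m + 1) T}, P S.1 →
        youngOp μ (m + 1) i.castSucc i.succ (Pi.single T 1) S =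
          ((rhoCoef i.castSucc i.succ T.1 : ℂ) • (Pi.single T 1 : YoungSpace μ (m + 1))) S := by
      refine fun S hS => youngOp_single_apply_of_comp_swap_ne fun hST => ?_
      have h := congrFun hST i.succ
      rw [Function.comp_apply, swap_apply_right, ← hS i.succ castSucc_lt_succ] at h
      exact (castSucc_lt_succ (i := i)).ne (S.2.1 h)
    rw [hρ.map_cycleRange_succ, Module.End.mul_apply,
      hρ.map_cycleRange_apply_eq_of_forall _ hP hY fun _ _ => rfl, map_smul,
      Pi.smul_apply, ih, filter_succ_le_succ, prod_insert (by simp), smul_eq_mul, mul_comm]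

theorem IsYoungOrthogonalRep.trace_finRotate (hρ : IsYoungOrthogonalRep μ (m + 1) ρ) :
    LinearMap.trace ℂ _ (ρ (finRotate (m + 1))) = weightSum m μ.cells := by
  rw [← cycleRange_last, LinearMap.trace_eq_matrix_trace ℂ (Pi.basisFun ℂ _), Matrix.trace,
    weightSum, Complex.ofReal_sum]
  refine sum_congr rfl fun T _ => ?_
  rw [Matrix.diag_apply, LinearMap.toMatrix_apply, Pi.basisFun_apply, Pi.basisFun_repr,
    hρ.map_cycleRange_single_apply_self, filter_true_of_mem fun i _ => Fin.le_last _,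
    tableauWeight, Complex.ofReal_prod]

end Trace

theorem YoungDiagram.colLen_zero_of_cells_eq_hook {μ : YoungDiagram} {a b : ℕ}
    (hμ : μ.cells = hook a b) : μ.colLen 0 = b + 1 := by
  have h (i : ℕ) : i < μ.colLen 0 ↔ i < b + 1 := by
    rw [← YoungDiagram.mem_iff_lt_colLen, ← YoungDiagram.mem_cells, hμ, mem_hook]
    omega
  have h₁ := h (μ.colLen 0)
  have h₂ := h (b + 1)
  omega

/-- The value of the irreducible character `χ^μ` of `S_k` (given by Young's orthogonal
form) at the `k`-cycle `(1 2 … k)` (realized as `finRotate k : Equiv.Perm (Fin k)`):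
it equals `(−1)^b` if `μ` is the hook `(k−b, 1, …, 1)` with `b` ones — i.e. if `μ` does
not contain the box `(1,1)` (0-indexed), in which case `b = colLen 0 − 1` — and `0` if
`μ` is not a hook, i.e. if `(1,1) ∈ μ`. -/
theorem character_at_full_cycle (k : ℕ) (hk : 0 < k)
    (μ : YoungDiagram) (hμ : μ.card = k)
    (ρ : Representation ℂ (Equiv.Perm (Fin k)) (YoungSpace μ k))
    (hρ : IsYoungOrthogonalRep μ k ρ) :
    (((1, 1) : ℕ × ℕ) ∉ μ →
      LinearMap.trace ℂ (YoungSpace μ k) (ρ (finRotate k)) =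
        (-1 : ℂ) ^ (μ.colLen 0 - 1)) ∧
    (((1, 1) : ℕ × ℕ) ∈ μ →
      LinearMap.trace ℂ (YoungSpace μ k) (ρ (finRotate k)) = 0) := by
  obtain ⟨m, rfl⟩ : ∃ m, k = m + 1 := ⟨k - 1, by omega⟩
  have hcard : μ.cells.card = m + 1 := hμ
  rw [hρ.trace_finRotate]
  refine ⟨fun h11 => ?_, fun h11 => ?_⟩
  · obtain ⟨a, b, hab⟩ := eq_hook_of_one_one_notMem μ.isLowerSet
      (card_pos.1 (by omega)) (by rwa [YoungDiagram.mem_cells])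
    have hn : a + b = m := by
      have := card_hook a b
      rw [← hab] at this
      omega
    rw [hab, weightSum_hook hn, YoungDiagram.colLen_zero_of_cells_eq_hook hab,
      Nat.add_sub_cancel, Complex.ofReal_pow, Complex.ofReal_neg, Complex.ofReal_one]
  · rw [weightSum_eq_zero_of_one_one_mem μ.isLowerSet hcard h11, Complex.ofReal_zero]
end

section
/- Let R = ℂ[x_1, x_2, …] be the polynomial ring in countably many variables and let ζ ∈ ℂ be nonzero. Then any ℂ-subspace of R that is invariant under all the partial derivative operators ∂/∂x_n (n ≥ 1) and under all the multiplication operators f ↦ ζ n x_n f (n ≥ 1) is either 0 or all of R. (Equivalently, the bosonic Fock space representation ℬ(α, ζ) of the Heisenberg algebra is irreducible for ζ ≠ 0.) -/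
/-!
Differentiating a nonzero polynomial of the subspace lowers its total degree until a nonzero
constant is reached, so in characteristic zero the subspace contains `1`. Since `ζ (n + 1) ≠ 0`,
the subspace is also stable under multiplication by every variable, hence contains every
polynomial `g = g * 1`.
-/

open MvPolynomial

namespace MvPolynomial

variable {σ : Type*}

theorem totalDegree_pderiv_le {R : Type*} [CommSemiring R] (i : σ) (f : MvPolynomial σ R) :
    (pderiv i f).totalDegree ≤ f.totalDegree - 1 := by
  refine Finset.sup_le fun m hm => ?_
  have hcoeff : coeff (m + Finsupp.single i 1) f ≠ 0 := by
    intro h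
    exact mem_support_iff.mp hm (by rw [coeff_pderiv, h, zero_mul])
  have hdeg := le_totalDegree (mem_support_iff.mpr hcoeff)
  rw [Finsupp.sum_add_index' (fun _ => rfl) (fun _ _ _ => rfl), Finsupp.sum_single_index rfl]
    at hdeg
  omega

theorem totalDegree_pderiv_lt {R : Type*} [CommSemiring R] {i : σ} {f : MvPolynomial σ R}
    (h : pderiv i f ≠ 0) : (pderiv i f).totalDegree < f.totalDegree := by
  have hf : f.totalDegree ≠ 0 := by
    intro hf
    rw [totalDegree_eq_zero_iff_eq_C.mp hf, pderiv_C] at h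
    exact h rfl
  have := totalDegree_pderiv_le i f
  omega

theorem eq_C_of_forall_pderiv_eq_zero {R : Type*} [CommSemiring R] [NoZeroDivisors R]
    [CharZero R] {f : MvPolynomial σ R} (h : ∀ i, pderiv i f = 0) : f = C (coeff 0 f) := by
  classical
  ext m
  rw [coeff_C]
  split_ifs with hm
  · rw [hm]
  obtain ⟨i, hi⟩ : ∃ i, m i ≠ 0 := by
    by_contra! hzero
    exact Ne.symm hm (Finsupp.ext hzero)
  have hsub : m - Finsupp.single i 1 + Finsupp.single i 1 = m :=
    tsub_add_cancel_of_le (Finsupp.single_le_iff.mpr (Nat.one_le_iff_ne_zero.mpr hi))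
  have hcoeff := coeff_pderiv (i := i) f (m - Finsupp.single i 1)
  rw [h i, coeff_zero, hsub] at hcoeff
  have hcast : (((m - Finsupp.single i 1 : σ →₀ ℕ) i : ℕ) : R) + 1 = (m i : R) := by
    rw [Finsupp.tsub_apply, Finsupp.single_eq_same]
    exact_mod_cast Nat.sub_add_cancel (Nat.one_le_iff_ne_zero.mpr hi)
  rw [hcast] at hcoeff
  exact ((mul_eq_zero.mp hcoeff.symm).resolve_right (Nat.cast_ne_zero.mpr hi))

section Field

variable {K : Type*} [Field K] [CharZero K] {p : Submodule K (MvPolynomial σ K)}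

theorem one_mem_of_pderiv_mem (hder : ∀ i f, f ∈ p → pderiv i f ∈ p)
    {f : MvPolynomial σ K} (hf : f ∈ p) (hf0 : f ≠ 0) : 1 ∈ p := by
  by_cases hconst : ∀ i, pderiv i f = 0
  · obtain ⟨c, rfl⟩ : ∃ c, f = C c := ⟨_, eq_C_of_forall_pderiv_eq_zero hconst⟩
    have hc : c ≠ 0 := fun hc => hf0 (by rw [hc, C_0])
    have hunit : c⁻¹ • C c = (1 : MvPolynomial σ K) := by
      rw [smul_eq_C_mul, ← C_mul, inv_mul_cancel₀ hc, C_1]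
    exact hunit ▸ p.smul_mem _ hf
  · obtain ⟨i, hi⟩ := not_forall.mp hconst
    exact one_mem_of_pderiv_mem hder (hder i f hf) hi
termination_by f.totalDegree
decreasing_by exact totalDegree_pderiv_lt hi

end Field

theorem eq_top_of_one_mem_of_X_mul_mem {R : Type*} [CommSemiring R]
    {p : Submodule R (MvPolynomial σ R)} (hone : 1 ∈ p) (hX : ∀ i f, f ∈ p → X i * f ∈ p) :
    p = ⊤ := by
  have hmul : ∀ g f, f ∈ p → g * f ∈ p := by
    intro g
    induction g using MvPolynomial.induction_on with
    | C a => exact fun f hf => by rw [← smul_eq_C_mul]; exact p.smul_mem a hf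
    | add g h hg hh => exact fun f hf => by rw [add_mul]; exact p.add_mem (hg f hf) (hh f hf)
    | mul_X g i hg => exact fun f hf => by rw [mul_comm g, mul_assoc]; exact hX i _ (hg _ hf)
  exact Submodule.eq_top_iff'.mpr fun g => mul_one g ▸ hmul g 1 hone

end MvPolynomial

/-- Irreducibility of the bosonic Fock space:  let `R = ℂ[x₁, x₂, …]` be the polynomial
ring in countably many variables (here `xₙ` is `MvPolynomial.X (n-1)`, i.e. the variable
with index `n - 1 : ℕ`) and let `ζ ≠ 0`.  Any `ℂ`-subspace of `R` invariant under all
partial derivatives `∂/∂xₙ` and under all multiplication operators `f ↦ ζ n xₙ f`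
(`n ≥ 1`) is either `0` or all of `R`. -/
theorem bosonic_fock_space_irreducible (ζ : ℂ) (hζ : ζ ≠ 0)
    (p : Submodule ℂ (MvPolynomial ℕ ℂ))
    (hder : ∀ (i : ℕ) (f : MvPolynomial ℕ ℂ), f ∈ p → MvPolynomial.pderiv i f ∈ p)
    (hmul : ∀ (i : ℕ) (f : MvPolynomial ℕ ℂ), f ∈ p →
      (ζ * ((i : ℂ) + 1)) • (MvPolynomial.X i * f) ∈ p) :
    p = ⊥ ∨ p = ⊤ := by
  refine or_iff_not_imp_left.mpr fun hp => ?_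
  obtain ⟨f, hf, hf0⟩ := (Submodule.ne_bot_iff p).mp hp
  have hX : ∀ i f, f ∈ p → X i * f ∈ p := by
    intro i f hf
    have hscale : ζ * ((i : ℂ) + 1) ≠ 0 := mul_ne_zero hζ (Nat.cast_add_one_ne_zero i)
    have hscaled := p.smul_mem (ζ * ((i : ℂ) + 1))⁻¹ (hmul i f hf)
    rwa [inv_smul_smul₀ hscale] at hscaled
  exact eq_top_of_one_mem_of_X_mul_mem
    (one_mem_of_pderiv_mem hder hf hf0) hX
end
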